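/- arXiv:0904.4179 — 7 statements merged into one kernel-verified Lean document; each statement's English description precedes it below -/
import Mathlib

section
/- Let r > 0, ε > 0 and δ > 0 with δ < ε·r. Then there is no continuous function f : D(0,r) → ℂ on the open disk D(0,r) of radius r centered at 0 such that |f(ζ)² − ε·ζ| < δ for all ζ ∈ D(0,r). -/
open Metric

/-!
On the circle `|ζ| = δ / ε` we have `f(ζ)² ≈ εζ` and `f(-ζ)² ≈ -εζ`, which keeps the ratio
`f(ζ) / f(-ζ)` off the real line. But replacing `ζ` by `-ζ` inverts this ratio and so flips the
sign of its imaginary part; since the circle is connected, the ratio must be real somewhere.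
-/

theorem Complex.im_inv_mul_im_nonpos (w : ℂ) : w⁻¹.im * w.im ≤ 0 := by
  rw [Complex.inv_im, div_mul_eq_mul_div, neg_mul, neg_div, neg_nonpos]
  exact div_nonneg (mul_self_nonneg _) (Complex.normSq_nonneg w)

theorem IsPreconnected.exists_im_div_neg_eq_zero {E : Type*} [TopologicalSpace E] [InvolutiveNeg E]
    [ContinuousNeg E] {s : Set E} (hs : IsPreconnected s) (hneg : ∀ x ∈ s, -x ∈ s) {x₀ : E}
    (hx₀ : x₀ ∈ s) {g : E → ℂ} (hg : ContinuousOn g s) (hg₀ : ∀ x ∈ s, g x ≠ 0) :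
    ∃ x ∈ s, (g x / g (-x)).im = 0 := by
  set h : E → ℝ := fun x ↦ (g x / g (-x)).im
  have hcont : ContinuousOn h s :=
    Complex.continuous_im.comp_continuousOn <|
      hg.div (hg.comp continuous_neg.continuousOn hneg) fun x hx ↦ hg₀ (-x) (hneg x hx)
  have hsign : h (-x₀) * h x₀ ≤ 0 := by
    simpa only [h, neg_neg, inv_div] using Complex.im_inv_mul_im_nonpos (g x₀ / g (-x₀))
  rcases mul_nonpos_iff.1 hsign with ⟨hpos, hnonpos⟩ | ⟨hnonpos, hpos⟩
  · exact hs.intermediate_value₂ hx₀ (hneg x₀ hx₀) hcont continuousOn_const hnonpos hpos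
  · exact hs.intermediate_value₂ (hneg x₀ hx₀) hx₀ hcont continuousOn_const hnonpos hpos

theorem ne_zero_of_norm_sq_add_lt {R : Type*} [SeminormedRing R] {b w : R} {δ : ℝ}
    (hb : ‖b ^ 2 + w‖ < δ) (hw : δ ≤ ‖w‖) : b ≠ 0 := by
  rintro rfl
  rw [zero_pow two_ne_zero, zero_add] at hb
  exact hb.not_ge hw

/-- If `a / b = s` were real, then `(1 + s²) w = (w - a²) + s² (b² + w)` would have norm
less than `(1 + s²) δ ≤ ‖(1 + s²) w‖`. -/
theorem Complex.im_div_ne_zero_of_norm_sq_sub_lt {a b w : ℂ} {δ : ℝ} (ha : ‖a ^ 2 - w‖ < δ)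
    (hb : ‖b ^ 2 + w‖ < δ) (hw : δ ≤ ‖w‖) : (a / b).im ≠ 0 := by
  intro him
  set s := (a / b).re
  have hab : a = s * b := by
    rw [← div_mul_cancel₀ a (ne_zero_of_norm_sq_add_lt hb hw)]
    congr 1
    exact Complex.ext rfl him
  have hdecomp : ((1 + s ^ 2 : ℝ) : ℂ) * w = (w - a ^ 2) + (s ^ 2 : ℝ) * (b ^ 2 + w) := by
    rw [hab]; push_cast; ring
  have hs : (0 : ℝ) ≤ s ^ 2 := sq_nonneg s
  have : (1 + s ^ 2) * ‖w‖ < (1 + s ^ 2) * δ :=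
    calc (1 + s ^ 2) * ‖w‖ = ‖(w - a ^ 2) + (s ^ 2 : ℝ) * (b ^ 2 + w)‖ := by
          rw [← hdecomp, norm_mul, Complex.norm_real, Real.norm_of_nonneg (by positivity)]
      _ ≤ ‖w - a ^ 2‖ + s ^ 2 * ‖b ^ 2 + w‖ := by
          grw [norm_add_le, norm_mul, Complex.norm_real, Real.norm_of_nonneg hs]
      _ < δ + s ^ 2 * δ := by
          rw [norm_sub_rev]
          exact add_lt_add_of_lt_of_le ha (mul_le_mul_of_nonneg_left hb.le hs)
      _ = (1 + s ^ 2) * δ := by ring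
  nlinarith

theorem no_continuous_approx_sqrt_general (r ε δ : ℝ) (hε : 0 < ε) (hδ : 0 < δ)
    (hδεr : δ < ε * r) :
    ¬ ∃ f : ℂ → ℂ, ContinuousOn f (ball (0 : ℂ) r) ∧
      ∀ ζ ∈ ball (0 : ℂ) r, ‖(f ζ) ^ 2 - ε * ζ‖ < δ := by
  rintro ⟨f, hfc, hf⟩
  set ρ := δ / ε
  have hρ : 0 ≤ ρ := by positivity
  have hsphere : sphere (0 : ℂ) ρ ⊆ ball 0 r := sphere_subset_ball ((div_lt_iff₀' hε).2 hδεr)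
  have hnorm : ∀ ζ ∈ sphere (0 : ℂ) ρ, δ ≤ ‖(ε : ℂ) * ζ‖ := fun ζ hζ ↦ by
    rw [norm_mul, mem_sphere_zero_iff_norm.1 hζ, Complex.norm_real, Real.norm_of_nonneg hε.le,
      mul_div_cancel₀ δ hε.ne']
  have hneg : ∀ ζ ∈ sphere (0 : ℂ) ρ, -ζ ∈ sphere (0 : ℂ) ρ := fun ζ hζ ↦ by simpa using hζ
  have hf_neg : ∀ ζ ∈ sphere (0 : ℂ) ρ, ‖f (-ζ) ^ 2 + ε * ζ‖ < δ := fun ζ hζ ↦ by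
    simpa using hf (-ζ) (hsphere (hneg ζ hζ))
  have hf₀ : ∀ ζ ∈ sphere (0 : ℂ) ρ, f ζ ≠ 0 := fun ζ hζ ↦
    ne_zero_of_norm_sq_add_lt (w := -(ε * ζ)) (by simpa [sub_eq_add_neg] using hf ζ (hsphere hζ))
      (by simpa using hnorm ζ hζ)
  have hconn : IsPreconnected (sphere (0 : ℂ) ρ) :=
    (isConnected_sphere (by simp [Complex.rank_real_complex]) 0 hρ).isPreconnected
  obtain ⟨ζ, hζ, him⟩ := hconn.exists_im_div_neg_eq_zero hneg (x₀ := ρ) (by simp [hρ])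
    (hfc.mono hsphere) hf₀
  exact Complex.im_div_ne_zero_of_norm_sq_sub_lt (hf ζ (hsphere hζ)) (hf_neg ζ hζ) (hnorm ζ hζ) him

/-- No continuous approximate square root of `ε·ζ` on the disk `D(0,r)` when `δ < ε·r`. -/
theorem no_continuous_approx_sqrt (r ε δ : ℝ) (hr : 0 < r) (hε : 0 < ε) (hδ : 0 < δ)
    (hδεr : δ < ε * r) :
    ¬ ∃ f : ℂ → ℂ, ContinuousOn f (ball (0 : ℂ) r) ∧
      ∀ ζ ∈ ball (0 : ℂ) r, ‖(f ζ) ^ 2 - ε * ζ‖ < δ :=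
  no_continuous_approx_sqrt_general r ε δ hε hδ hδεr
end

section
/- For any x ∈ ℂ, log max(|x|, 1) = (1/2π) ∫₀^{2π} log |x − e^{iθ}| dθ. -/
open Real

/-- `log max(|x|,1)` equals the average of `log|x - e^{iθ}|` over the unit circle. -/
theorem log_max_abs_one_eq_circle_average (x : ℂ) :
    Real.log (max ‖x‖ 1) =
      (1 / (2 * π)) * ∫ θ in (0:ℝ)..(2 * π),
        Real.log ‖x - Complex.exp (θ * Complex.I)‖ := by
  rw [max_comm, ← posLog_eq_log_max_one (norm_nonneg x),
    ← circleAverage_log_norm_sub_const_eq_posLog, circleAverage_def, one_div, smul_eq_mul]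
  simp only [circleMap_zero, Complex.ofReal_one, one_mul, norm_sub_rev]
end

section
/- Let μ be a finite positive Borel measure on ℂ, let C > 0, and suppose μ(D(z,r)) ≤ C·r for every z ∈ ℂ and every r > 0. Then there is a constant C' (depending only on C and the total mass of μ) such that for every z with |z| ≤ 1, |∫ log|z − ζ| dμ(ζ)| ≤ C', where the integral is over the closed unit disk and μ is supported in the closed unit disk. -/
/-!
On the closed unit disk `|z - ζ| ≤ 2`, so `log |z - ζ| ≤ log 2` and only the negative part of the
logarithm needs control. By the layer-cake formula its integral is
`∫_0^∞ μ {ζ | -log |z - ζ| > t} dt ≤ ∫_0^∞ μ (D(z, e^{-t})) dt ≤ ∫_0^∞ C e^{-t} dt = C`,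
hence `∫ |log |z - ζ|| dμ ≤ μ(ℂ) log 2 + C`.
-/

open Metric MeasureTheory

theorem Real.lt_exp_neg_of_lt_neg_log {x t : ℝ} (hx : 0 ≤ x) (h : t < -Real.log x) :
    x < Real.exp (-t) := by
  rcases hx.eq_or_lt with rfl | hx
  · exact Real.exp_pos _
  · rw [← Real.log_lt_iff_lt_exp hx]
    linarith

theorem ENNReal.ofReal_abs_le_ofReal_add_ofReal_neg {a b : ℝ} (h : a ≤ b) :
    ENNReal.ofReal |a| ≤ ENNReal.ofReal b + ENNReal.ofReal (-a) := by
  rcases le_total 0 a with ha | ha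
  · rw [abs_of_nonneg ha]
    exact (ENNReal.ofReal_le_ofReal h).trans le_self_add
  · rw [abs_of_nonpos ha]
    exact le_add_self

theorem lintegral_ofReal_exp_neg_Ioi_zero :
    ∫⁻ t in Set.Ioi (0 : ℝ), ENNReal.ofReal (Real.exp (-t)) = 1 := by
  rw [← ofReal_integral_eq_lintegral_ofReal (integrableOn_exp_neg_Ioi 0)
    (Filter.Eventually.of_forall fun t => (Real.exp_pos _).le), integral_exp_neg_Ioi_zero,
    ENNReal.ofReal_one]

section

variable {α : Type*} [PseudoMetricSpace α] [MeasurableSpace α] [OpensMeasurableSpace α]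
  {μ : Measure α} {z : α} {C : ℝ}

-- `ENNReal.ofReal` truncates at `0`, so the left side is the integral of `log⁻ (dist z ζ)`.
theorem lintegral_ofReal_neg_log_dist_le
    (hμ : ∀ r : ℝ, 0 < r → μ (ball z r) ≤ ENNReal.ofReal (C * r)) :
    ∫⁻ ζ, ENNReal.ofReal (-Real.log (dist z ζ)) ∂μ ≤ ENNReal.ofReal C := by
  have hmeas : Measurable fun ζ => -Real.log (dist z ζ) :=
    (Real.measurable_log.comp (continuous_const.dist continuous_id).measurable).neg
  calc ∫⁻ ζ, ENNReal.ofReal (-Real.log (dist z ζ)) ∂μ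
      = ∫⁻ ζ, ENNReal.ofReal (max (-Real.log (dist z ζ)) 0) ∂μ := by
        simp [ENNReal.ofReal_max]
    _ = ∫⁻ t in Set.Ioi 0, μ {ζ | t < max (-Real.log (dist z ζ)) 0} :=
        lintegral_eq_lintegral_meas_lt μ (Filter.Eventually.of_forall fun _ => le_max_right _ _)
          (hmeas.max measurable_const).aemeasurable
    _ ≤ ∫⁻ t in Set.Ioi 0, ENNReal.ofReal C * ENNReal.ofReal (Real.exp (-t)) := by
        refine setLIntegral_mono' measurableSet_Ioi fun t (ht : 0 < t) => ?_
        rw [← ENNReal.ofReal_mul' (Real.exp_pos _).le]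
        refine (measure_mono fun ζ hζ => ?_).trans (hμ _ (Real.exp_pos _))
        rw [Set.mem_ofPred_eq, lt_max_iff, or_iff_left ht.not_gt] at hζ
        rw [mem_ball, dist_comm]
        exact Real.lt_exp_neg_of_lt_neg_log dist_nonneg hζ
    _ = ENNReal.ofReal C := by
        rw [lintegral_const_mul _ (by fun_prop), lintegral_ofReal_exp_neg_Ioi_zero, mul_one]

theorem lintegral_abs_log_dist_le {R : ℝ} (hR : 1 ≤ R) (hsupp : ∀ᵐ ζ ∂μ, dist z ζ ≤ R)
    (hμ : ∀ r : ℝ, 0 < r → μ (ball z r) ≤ ENNReal.ofReal (C * r)) :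
    ∫⁻ ζ, ENNReal.ofReal |Real.log (dist z ζ)| ∂μ ≤
      ENNReal.ofReal (Real.log R) * μ Set.univ + ENNReal.ofReal C := by
  have hlog : ∀ᵐ ζ ∂μ, ENNReal.ofReal |Real.log (dist z ζ)| ≤
      ENNReal.ofReal (Real.log R) + ENNReal.ofReal (-Real.log (dist z ζ)) := by
    filter_upwards [hsupp] with ζ hζ
    refine ENNReal.ofReal_abs_le_ofReal_add_ofReal_neg ?_
    rcases (dist_nonneg : 0 ≤ dist z ζ).eq_or_lt with h0 | h0
    · rw [← h0, Real.log_zero]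
      exact Real.log_nonneg hR
    · exact Real.log_le_log h0 hζ
  calc ∫⁻ ζ, ENNReal.ofReal |Real.log (dist z ζ)| ∂μ
      ≤ ∫⁻ ζ, ENNReal.ofReal (Real.log R) + ENNReal.ofReal (-Real.log (dist z ζ)) ∂μ :=
        lintegral_mono_ae hlog
    _ = ENNReal.ofReal (Real.log R) * μ Set.univ +
          ∫⁻ ζ, ENNReal.ofReal (-Real.log (dist z ζ)) ∂μ := by
        rw [lintegral_add_left measurable_const, lintegral_const]
    _ ≤ ENNReal.ofReal (Real.log R) * μ Set.univ + ENNReal.ofReal C := by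
        gcongr
        exact lintegral_ofReal_neg_log_dist_le hμ

end

theorem bounded_log_potential_of_linear_disk_mass_general
    (μ : Measure ℂ) [IsFiniteMeasure μ] (hsupp : μ (closedBall (0 : ℂ) 1)ᶜ = 0)
    (C : ℝ)
    (hμ : ∀ (z : ℂ) (r : ℝ), 0 < r → μ (ball z r) ≤ ENNReal.ofReal (C * r)) :
    ∃ C' : ℝ, ∀ z : ℂ, ‖z‖ ≤ 1 →
      |∫ ζ, Real.log ‖z - ζ‖ ∂μ| ≤ C' := by
  refine ⟨(ENNReal.ofReal (Real.log 2) * μ Set.univ + ENNReal.ofReal C).toReal, fun z hz => ?_⟩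
  have hdist : ∀ᵐ ζ ∂μ, dist z ζ ≤ 2 := by
    filter_upwards [measure_eq_zero_iff_ae_notMem.1 hsupp] with ζ hζ
    rw [Set.notMem_compl_iff, mem_closedBall_zero_iff] at hζ
    rw [Complex.dist_eq]
    linarith [norm_sub_le z ζ]
  calc |∫ ζ, Real.log ‖z - ζ‖ ∂μ|
      ≤ (∫⁻ ζ, ENNReal.ofReal |Real.log (dist z ζ)| ∂μ).toReal := by
        simpa only [Real.norm_eq_abs, Complex.dist_eq] using
          norm_integral_le_lintegral_norm (μ := μ) fun ζ => Real.log ‖z - ζ‖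
    _ ≤ _ := ENNReal.toReal_mono (by finiteness)
        (lintegral_abs_log_dist_le one_le_two hdist (hμ z))

/-- A finite measure on the closed unit disk whose mass on disks grows at most linearly in the
radius has uniformly bounded logarithmic potential on the unit disk. -/
theorem bounded_log_potential_of_linear_disk_mass
    (μ : Measure ℂ) [IsFiniteMeasure μ] (hsupp : μ (closedBall (0 : ℂ) 1)ᶜ = 0)
    (C : ℝ) (hC : 0 < C)
    (hμ : ∀ (z : ℂ) (r : ℝ), 0 < r → μ (ball z r) ≤ ENNReal.ofReal (C * r)) :
    ∃ C' : ℝ, ∀ z : ℂ, ‖z‖ ≤ 1 →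
      |∫ ζ, Real.log ‖z - ζ‖ ∂μ| ≤ C' :=
  bounded_log_potential_of_linear_disk_mass_general μ hsupp C hμ
end

section
/- Let θ : (0, r₀) → (0, ∞) be C¹, decreasing, with θ(r) → +∞ as r → 0⁺, and suppose θ'(r)/θ(r) = o(1/(r·log r)) as r → 0⁺. Set h(r) = r²·θ(r). Then as r → 0⁺: (a) ∫₀^{2r} h(s)/s² ds ∼ 2r·θ(2r), and (b) ∫_r^{r₀} h(s)/s³ ds ∼ |log r|·θ(r). Consequently ψ(r) := ∫₀^{2r} h(s)/s² ds + r ∫_r^{r₀} h(s)/s³ ds satisfies ψ(r) = O(r·|log r|·θ(r)). -/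
/-!
Write `ε r = θ' r / θ r * (r log r) → 0`. Dividing by `log r` gives `r θ'/θ → 0`, so `√r θ(r)`
increases near `0`; hence `θ = O(r^{-1/2})` is integrable at `0` and `r θ(r) → 0`. Part (a) is then
l'Hôpital's rule for `0/0`: the ratio of derivatives is `θ / (θ + r θ') = 1 / (1 + r θ'/θ) → 1`.
In part (b) the derivatives of `∫_r^{r₀} θ(s)/s ds` and of `|log r| θ(r)` are `-θ/r` and
`-(θ/r)(1 + ε)`, and l'Hôpital's rule for `∞/∞` applies; it follows from the mean value
inequality, which bounds the variation of `f - l g` near the endpoint by `η` times that of `g`.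
Finally `θ(2r) ≤ θ(r)` and `|log r| ≥ 1` bound both terms of `ψ` by multiples of `r |log r| θ(r)`.
-/

open Filter Topology Set MeasureTheory Asymptotics

theorem abs_sub_le_of_abs_deriv_le_neg_deriv {D D' g g' : ℝ → ℝ} {x y : ℝ} (hxy : x ≤ y)
    (hD : ∀ t ∈ Icc x y, HasDerivAt D (D' t) t) (hg : ∀ t ∈ Icc x y, HasDerivAt g (g' t) t)
    (hbound : ∀ t ∈ Ico x y, |D' t| ≤ -g' t) :
    |D y - D x| ≤ g x - g y := by
  have hDc : ContinuousOn D (Icc x y) := fun t ht => (hD t ht).continuousAt.continuousWithinAt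
  have hgc : ContinuousOn g (Icc x y) := fun t ht => (hg t ht).continuousAt.continuousWithinAt
  refine image_norm_le_of_norm_deriv_right_le_deriv_boundary' (f := fun t => D t - D x)
    (B := fun t => g x - g t) (hDc.sub continuousOn_const)
    (fun t ht => ((hD t (Ico_subset_Icc_self ht)).sub_const (D x)).hasDerivWithinAt)
    (by simp) (continuousOn_const.sub hgc)
    (fun t ht => ((hg t (Ico_subset_Icc_self ht)).const_sub (g x)).hasDerivWithinAt)
    hbound (right_mem_Icc.2 hxy)

theorem lhopital_atTop_nhdsGT {f f' g g' : ℝ → ℝ} {a l : ℝ}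
    (hff' : ∀ᶠ x in 𝓝[>] a, HasDerivAt f (f' x) x)
    (hgg' : ∀ᶠ x in 𝓝[>] a, HasDerivAt g (g' x) x)
    (hg' : ∀ᶠ x in 𝓝[>] a, g' x < 0)
    (hg : Tendsto g (𝓝[>] a) atTop)
    (hdiv : Tendsto (fun x => f' x / g' x) (𝓝[>] a) (𝓝 l)) :
    Tendsto (fun x => f x / g x) (𝓝[>] a) (𝓝 l) := by
  rw [Metric.tendsto_nhds]
  intro ε hε
  set η := ε / 4
  have hclose : ∀ᶠ x in 𝓝[>] a, |f' x / g' x - l| ≤ η :=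
    (Metric.tendsto_nhds.1 hdiv η (by positivity)).mono fun x hx => hx.le
  obtain ⟨b, hab, hb⟩ := mem_nhdsGT_iff_exists_Ioo_subset.1 (hff'.and (hgg'.and (hg'.and hclose)))
  obtain ⟨y, hay, hyb⟩ := exists_between (mem_Ioi.1 hab)
  have hvar : ∀ x ∈ Ioc a y, |(f y - l * g y) - (f x - l * g x)| ≤ η * g x - η * g y := by
    intro x hx
    have hsub : Icc x y ⊆ Ioo a b := Icc_subset_Ioo hx.1 hyb
    refine abs_sub_le_of_abs_deriv_le_neg_deriv (g := fun t => η * g t) hx.2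
      (fun t ht => ((hb (hsub ht)).1.sub ((hb (hsub ht)).2.1.const_mul l)))
      (fun t ht => (hb (hsub ht)).2.1.const_mul η) fun t ht => ?_
    obtain ⟨-, -, hneg, hle⟩ := hb (hsub (Ico_subset_Icc_self ht))
    calc |f' t - l * g' t| = |f' t / g' t - l| * -g' t := by
          rw [← abs_of_neg hneg, ← abs_mul, div_sub' hneg.ne, div_mul_cancel₀ _ hneg.ne]
          ring_nf
      _ ≤ η * -g' t := mul_le_mul_of_nonneg_right hle (neg_nonneg.2 hneg.le)
      _ = -(η * g' t) := by ring
  set K := |f y - l * g y| + η * |g y|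
  filter_upwards [Ioo_mem_nhdsGT hay, hg.eventually_ge_atTop (K / η),
    hg.eventually_gt_atTop 0] with x hx hgK hgpos
  have hK : K ≤ η * g x := by rwa [div_le_iff₀' (by positivity)] at hgK
  have hbound : |f x - l * g x| ≤ 2 * η * g x := by
    have h1 := hvar x (Ioo_subset_Ioc_self hx)
    have h2 := abs_sub_abs_le_abs_sub (f x - l * g x) (f y - l * g y)
    rw [abs_sub_comm (f x - l * g x)] at h2
    have h3 : -(η * g y) ≤ η * |g y| := by
      rw [← mul_neg]; exact mul_le_mul_of_nonneg_left (neg_le_abs _) (by positivity)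
    linarith
  rw [Real.dist_eq, div_sub' hgpos.ne', abs_div, abs_of_pos hgpos, div_lt_iff₀ hgpos, mul_comm _ l]
  linarith [mul_lt_mul_of_pos_right (show 2 * η < ε by simp only [η]; linarith) hgpos]

theorem monotoneOn_rpow_mul_of_neg_le {θ θ' : ℝ → ℝ} {p c : ℝ}
    (hθ : ∀ x ∈ Ioo 0 c, HasDerivAt θ (θ' x) x) (hθ' : ∀ x ∈ Ioo 0 c, -p * θ x ≤ x * θ' x) :
    MonotoneOn (fun x => x ^ p * θ x) (Ioo 0 c) := by
  have hderiv : ∀ x ∈ Ioo 0 c,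
      HasDerivAt (fun x => x ^ p * θ x) (p * x ^ (p - 1) * θ x + x ^ p * θ' x) x := fun x hx =>
    (Real.hasDerivAt_rpow_const (Or.inl hx.1.ne')).mul (hθ x hx)
  refine monotoneOn_of_hasDerivWithinAt_nonneg (convex_Ioo 0 c)
    (fun x hx => (hderiv x hx).continuousAt.continuousWithinAt)
    (fun x hx => (hderiv x (interior_subset hx)).hasDerivWithinAt) fun x hx => ?_
  rw [interior_Ioo] at hx
  have hx0 : 0 < x := hx.1
  have : p * x ^ (p - 1) * θ x + x ^ p * θ' x = x ^ (p - 1) * (p * θ x + x * θ' x) := by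
    rw [Real.rpow_sub_one hx.1.ne']; field_simp
  rw [this]
  exact mul_nonneg (Real.rpow_nonneg hx0.le _) (by linarith [hθ' x hx])

theorem exists_eventually_le_mul_rpow_neg_half {θ θ' : ℝ → ℝ}
    (hθ : ∀ᶠ x in 𝓝[>] 0, HasDerivAt θ (θ' x) x) (hpos : ∀ᶠ x in 𝓝[>] 0, 0 < θ x)
    (hε : Tendsto (fun x => θ' x / θ x * x) (𝓝[>] 0) (𝓝 0)) :
    ∃ K, ∀ᶠ x in 𝓝[>] 0, θ x ≤ K * x ^ (-(1 / 2) : ℝ) := by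
  have hsmall : ∀ᶠ x in 𝓝[>] 0, -(1 / 2) < θ' x / θ x * x :=
    hε.eventually (lt_mem_nhds (by norm_num))
  obtain ⟨c, hc, hsub⟩ := mem_nhdsGT_iff_exists_Ioo_subset.1 (hθ.and (hpos.and hsmall))
  have hmono : MonotoneOn (fun x => x ^ (1 / 2 : ℝ) * θ x) (Ioo 0 c) := by
    refine monotoneOn_rpow_mul_of_neg_le (fun x hx => (hsub hx).1) fun x hx => ?_
    obtain ⟨-, hθx, hx'⟩ := hsub hx
    rw [div_mul_eq_mul_div, lt_div_iff₀ hθx] at hx'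
    linarith
  obtain ⟨y, hy0, hyc⟩ := exists_between (mem_Ioi.1 hc)
  refine ⟨y ^ (1 / 2 : ℝ) * θ y, ?_⟩
  filter_upwards [Ioo_mem_nhdsGT hy0] with x hx
  have hle := hmono ⟨hx.1, hx.2.trans hyc⟩ ⟨hy0, hyc⟩ hx.2.le
  rw [Real.rpow_neg hx.1.le, ← div_eq_mul_inv, le_div_iff₀ (Real.rpow_pos_of_pos hx.1 _), mul_comm]
  exact hle

theorem tendsto_integral_zero_nhdsGT {f : ℝ → ℝ} {c : ℝ} (hc : 0 < c)
    (hf : IntervalIntegrable f volume 0 c) :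
    Tendsto (fun x => ∫ s in 0..x, f s) (𝓝[>] 0) (𝓝 0) := by
  have hmem : (0 : ℝ) ∈ uIcc 0 c := left_mem_uIcc
  have hcont := (intervalIntegral.continuousOn_primitive_interval' hf hmem) 0 hmem
  rw [uIcc_of_le hc.le] at hcont
  simpa using (hcont.mono Ioo_subset_Icc_self).tendsto.mono_left
    (nhdsWithin_Ioo_eq_nhdsGT hc).ge

theorem intervalIntegrable_of_le_mul_rpow {θ : ℝ → ℝ} {c K r : ℝ} (hc : 0 ≤ c) (hr : -1 < r)
    (hcont : ContinuousOn θ (Ioc 0 c)) (hpos : ∀ x ∈ Ioc 0 c, 0 < θ x)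
    (hle : ∀ x ∈ Ioc 0 c, θ x ≤ K * x ^ r) :
    IntervalIntegrable θ volume 0 c := by
  rw [intervalIntegrable_iff_integrableOn_Ioc_of_le hc]
  have hmaj : IntegrableOn (fun x => K * x ^ r) (Ioc 0 c) :=
    (intervalIntegrable_iff_integrableOn_Ioc_of_le hc).1
      ((intervalIntegral.intervalIntegrable_rpow' hr).const_mul K)
  refine hmaj.mono' (hcont.aestronglyMeasurable measurableSet_Ioc) ?_
  filter_upwards [ae_restrict_mem measurableSet_Ioc] with x hx
  rw [Real.norm_eq_abs, abs_of_pos (hpos x hx)]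
  exact hle x hx

theorem tendsto_zero_of_tendsto_mul_log {u : ℝ → ℝ}
    (h : Tendsto (fun x => u x * Real.log x) (𝓝[>] 0) (𝓝 0)) : Tendsto u (𝓝[>] 0) (𝓝 0) := by
  have hinv : Tendsto (fun x => (Real.log x)⁻¹) (𝓝[>] 0) (𝓝 0) :=
    tendsto_inv_atBot_zero.comp Real.tendsto_log_nhdsGT_zero
  refine (mul_zero (0 : ℝ) ▸ h.mul hinv).congr' ?_
  filter_upwards [Ioo_mem_nhdsGT one_pos] with x hx
  rw [mul_assoc, mul_inv_cancel₀ (Real.log_neg hx.1 hx.2).ne, mul_one]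

theorem tendsto_mul_of_le_mul_rpow {θ : ℝ → ℝ} {K r : ℝ} (hr : -1 < r)
    (hθ : ∀ᶠ x in 𝓝[>] 0, 0 ≤ θ x ∧ θ x ≤ K * x ^ r) :
    Tendsto (fun x => x * θ x) (𝓝[>] 0) (𝓝 0) := by
  have hpow : Tendsto (fun x : ℝ => K * x ^ (1 + r)) (𝓝[>] 0) (𝓝 0) := by
    have := ((Real.continuousAt_rpow_const 0 (1 + r) (Or.inr (by linarith))).tendsto).const_mul K
    rw [Real.zero_rpow (by linarith), mul_zero] at this
    exact this.mono_left nhdsWithin_le_nhds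
  refine tendsto_of_tendsto_of_tendsto_of_le_of_le' tendsto_const_nhds hpow ?_ ?_
  · filter_upwards [self_mem_nhdsWithin, hθ] with x (hx : 0 < x) hθx
    exact mul_nonneg hx.le hθx.1
  · filter_upwards [self_mem_nhdsWithin, hθ] with x (hx : 0 < x) hθx
    rw [Real.rpow_one_add' hx.le (by linarith), mul_left_comm]
    exact mul_le_mul_of_nonneg_left hθx.2 hx.le

theorem tendsto_integral_div_mul_self {θ θ' : ℝ → ℝ}
    (hθ : ∀ᶠ x in 𝓝[>] 0, HasDerivAt θ (θ' x) x) (hpos : ∀ᶠ x in 𝓝[>] 0, 0 < θ x)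
    (hε : Tendsto (fun x => θ' x / θ x * x) (𝓝[>] 0) (𝓝 0)) :
    Tendsto (fun x => (∫ s in 0..x, θ s) / (x * θ x)) (𝓝[>] 0) (𝓝 1) := by
  obtain ⟨K, hK⟩ := exists_eventually_le_mul_rpow_neg_half hθ hpos hε
  obtain ⟨c, hc, hsub⟩ := mem_nhdsGT_iff_exists_Ioo_subset.1 (hθ.and (hpos.and hK))
  obtain ⟨y, hy0, hyc⟩ := exists_between (mem_Ioi.1 hc)
  have hθc : ContinuousOn θ (Ioo 0 c) := fun t ht => (hsub ht).1.continuousAt.continuousWithinAt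
  have hIoc : Ioc 0 y ⊆ Ioo 0 c := Ioc_subset_Ioo_right hyc
  have hint : IntervalIntegrable θ volume 0 y :=
    intervalIntegrable_of_le_mul_rpow hy0.le (by norm_num) (hθc.mono hIoc)
      (fun x hx => (hsub (hIoc hx)).2.1) fun x hx => (hsub (hIoc hx)).2.2
  have hderiv_eq : ∀ {x}, θ x ≠ 0 → θ x + x * θ' x = θ x * (1 + θ' x / θ x * x) := by
    intro x hx; field_simp
  have hsmall : ∀ᶠ x in 𝓝[>] 0, 0 < 1 + θ' x / θ x * x :=
    hε.eventually (lt_mem_nhds (show (-1 : ℝ) < 0 by norm_num)) |>.mono fun x hx => by linarith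
  refine HasDerivAt.lhopital_zero_nhdsGT (f' := θ) (g' := fun x => θ x + x * θ' x) ?_ ?_ ?_
    (tendsto_integral_zero_nhdsGT hy0 hint)
    (tendsto_mul_of_le_mul_rpow (by norm_num) (hpos.and hK |>.mono fun x hx => ⟨hx.1.le, hx.2⟩)) ?_
  · filter_upwards [Ioo_mem_nhdsGT hy0] with x hx
    have hxc : x ∈ Ioo 0 c := ⟨hx.1, hx.2.trans hyc⟩
    exact intervalIntegral.integral_hasDerivAt_right
      (hint.mono_set (uIcc_subset_uIcc left_mem_uIcc (Icc_subset_uIcc (Ioo_subset_Icc_self hx))))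
      (hθc.stronglyMeasurableAtFilter isOpen_Ioo x hxc) (hsub hxc).1.continuousAt
  · filter_upwards [hθ] with x hx
    simpa using (hasDerivAt_id' x).fun_mul hx
  · filter_upwards [hpos, hsmall] with x hθx hx
    rw [hderiv_eq hθx.ne']
    exact (mul_pos hθx hx).ne'
  · have hlim := ((tendsto_const_nhds (x := (1 : ℝ))).add hε).inv₀ (by norm_num)
    rw [add_zero, inv_one] at hlim
    refine hlim.congr' ?_
    filter_upwards [hpos] with x hθx
    rw [hderiv_eq hθx.ne', div_mul_cancel_left₀ hθx.ne']

theorem intervalIntegrable_of_antitoneOn_Ico {F : ℝ → ℝ} {a b : ℝ} (hab : a ≤ b)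
    (hF : AntitoneOn F (Ico a b)) (hF0 : ∀ x ∈ Ico a b, 0 ≤ F x) :
    IntervalIntegrable F volume a b := by
  rcases hab.eq_or_lt with rfl | hab
  · exact IntervalIntegrable.refl
  rw [intervalIntegrable_iff_integrableOn_Ico_of_le hab.le]
  refine (integrableOn_const (C := F a) (by simp)).mono'
    (aemeasurable_restrict_of_antitoneOn measurableSet_Ico hF).aestronglyMeasurable ?_
  filter_upwards [ae_restrict_mem measurableSet_Ico] with x hx
  rw [Real.norm_eq_abs, abs_of_nonneg (hF0 x hx)]
  exact hF (left_mem_Ico.2 hab) hx hx.1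

theorem hasDerivAt_integral_div_self_left {θ : ℝ → ℝ} {r₀ x : ℝ}
    (hcont : ContinuousOn θ (Ioo 0 r₀)) (hpos : ∀ x ∈ Ioo 0 r₀, 0 < θ x)
    (hanti : AntitoneOn θ (Ioo 0 r₀)) (hx : x ∈ Ioo 0 r₀) :
    HasDerivAt (fun r => ∫ s in r..r₀, θ s / s) (-(θ x / x)) x := by
  have hqcont : ContinuousOn (fun s => θ s / s) (Ioo 0 r₀) :=
    hcont.div continuousOn_id fun s hs => hs.1.ne'
  have hsub : Ico x r₀ ⊆ Ioo 0 r₀ := fun t ht => ⟨hx.1.trans_le ht.1, ht.2⟩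
  have hanti' : AntitoneOn (fun s => θ s / s) (Ico x r₀) := fun s hs t ht hst =>
    div_le_div₀ (hpos s (hsub hs)).le (hanti (hsub hs) (hsub ht) hst) (hsub hs).1 hst
  refine intervalIntegral.integral_hasDerivAt_left ?_
    (hqcont.stronglyMeasurableAtFilter isOpen_Ioo x hx)
    (hqcont.continuousAt (isOpen_Ioo.mem_nhds hx))
  exact intervalIntegrable_of_antitoneOn_Ico hx.2.le hanti'
    fun t ht => (div_pos (hpos t (hsub ht)) (hsub ht).1).le

theorem hasDerivAt_neg_log_mul {θ : ℝ → ℝ} {θ' x : ℝ} (hθ : HasDerivAt θ θ' x) (hx : 0 < x)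
    (hθx : θ x ≠ 0) :
    HasDerivAt (fun r => -Real.log r * θ r)
      (-(θ x / x) * (1 + θ' / θ x * (x * Real.log x))) x := by
  refine (((Real.hasDerivAt_log hx.ne').neg).fun_mul hθ).congr_deriv ?_
  simp only [Pi.neg_apply]
  field_simp
  ring

theorem tendsto_integral_div_self_div_abs_log_mul {θ θ' : ℝ → ℝ} {r₀ : ℝ} (hr₀ : 0 < r₀)
    (hθ : ∀ x ∈ Ioo 0 r₀, HasDerivAt θ (θ' x) x) (hpos : ∀ x ∈ Ioo 0 r₀, 0 < θ x)
    (hanti : AntitoneOn θ (Ioo 0 r₀)) (htop : Tendsto θ (𝓝[>] 0) atTop)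
    (hε : Tendsto (fun x => θ' x / θ x * (x * Real.log x)) (𝓝[>] 0) (𝓝 0)) :
    Tendsto (fun r => (∫ s in r..r₀, θ s / s) / (|Real.log r| * θ r)) (𝓝[>] 0) (𝓝 1) := by
  have hnear : ∀ᶠ x in 𝓝[>] 0, x ∈ Ioo 0 r₀ ∧ x < 1 :=
    Filter.mem_of_superset (Ioo_mem_nhdsGT (lt_min hr₀ one_pos)) fun x hx =>
      ⟨⟨hx.1, hx.2.trans_le (min_le_left _ _)⟩, hx.2.trans_le (min_le_right _ _)⟩
  have hcont : ContinuousOn θ (Ioo 0 r₀) := fun x hx => (hθ x hx).continuousAt.continuousWithinAt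
  have hεpos : ∀ᶠ x in 𝓝[>] 0, 0 < 1 + θ' x / θ x * (x * Real.log x) :=
    hε.eventually (lt_mem_nhds (show (-1 : ℝ) < 0 by norm_num)) |>.mono fun x hx => by linarith
  have hlim : Tendsto (fun r => (∫ s in r..r₀, θ s / s) / (-Real.log r * θ r)) (𝓝[>] 0) (𝓝 1) := by
    refine lhopital_atTop_nhdsGT
      (hnear.mono fun x hx => hasDerivAt_integral_div_self_left hcont hpos hanti hx.1)
      (hnear.mono fun x hx => hasDerivAt_neg_log_mul (hθ x hx.1) hx.1.1 (hpos x hx.1).ne') ?_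
      ((tendsto_neg_atBot_atTop.comp Real.tendsto_log_nhdsGT_zero).atTop_mul_atTop₀ htop) ?_
    · filter_upwards [hnear, hεpos] with x hx hεx
      exact mul_neg_of_neg_of_pos (neg_neg_of_pos (div_pos (hpos x hx.1) hx.1.1)) hεx
    · have h := ((tendsto_const_nhds (x := (1 : ℝ))).add hε).inv₀ (by norm_num)
      rw [add_zero, inv_one] at h
      refine h.congr' ?_
      filter_upwards [hnear] with x hx
      rw [div_mul_cancel_left₀ (neg_ne_zero.2 (div_pos (hpos x hx.1) hx.1.1).ne')]
  refine hlim.congr' ?_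
  filter_upwards [hnear] with x hx
  rw [abs_of_neg (Real.log_neg hx.1.1 hx.2)]

theorem exists_abs_add_mul_le_of_tendsto_div {θ A B : ℝ → ℝ} {r₀ : ℝ} (hr₀ : 0 < r₀)
    (hpos : ∀ x ∈ Ioo 0 r₀, 0 < θ x) (hanti : AntitoneOn θ (Ioo 0 r₀))
    (hA : Tendsto (fun r => A r / (2 * r * θ (2 * r))) (𝓝[>] 0) (𝓝 1))
    (hB : Tendsto (fun r => B r / (|Real.log r| * θ r)) (𝓝[>] 0) (𝓝 1)) :
    ∃ C : ℝ, ∀ᶠ r in 𝓝[>] 0, |A r + r * B r| ≤ C * (r * |Real.log r| * θ r) := by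
  have hsmall : ∀ᶠ r in 𝓝[>] 0, 0 < r ∧ 2 * r < r₀ ∧ 1 ≤ |Real.log r| := by
    filter_upwards [Ioo_mem_nhdsGT (lt_min (half_pos hr₀) (Real.exp_pos (-1)))] with r hr
    have hlog : Real.log r < -1 :=
      Real.log_exp (-1) ▸ Real.log_lt_log hr.1 (hr.2.trans_le (min_le_right _ _))
    refine ⟨hr.1, by linarith [hr.2.trans_le (min_le_left _ _)], ?_⟩
    rw [abs_of_neg (by linarith)]
    linarith
  have hAO : A =O[𝓝[>] 0] fun r => r * |Real.log r| * θ r := by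
    refine (isBigO_of_div_tendsto_nhds (g := fun r => 2 * r * θ (2 * r)) ?_ 1 hA).trans
      (IsBigO.of_bound 2 ?_)
    · filter_upwards [hsmall] with r ⟨hr, h2r, _⟩ h0
      exact absurd h0 (mul_pos (by positivity) (hpos _ ⟨by positivity, h2r⟩)).ne'
    · filter_upwards [hsmall] with r ⟨hr, h2r, hlog⟩
      have hr' : r ∈ Ioo 0 r₀ := ⟨hr, by linarith⟩
      have h2r' : 2 * r ∈ Ioo 0 r₀ := ⟨by positivity, h2r⟩
      have hθle : θ (2 * r) ≤ θ r := hanti hr' h2r' (by linarith)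
      have hθr := (hpos _ hr').le
      rw [Real.norm_eq_abs, Real.norm_eq_abs, abs_of_pos (mul_pos (by positivity) (hpos _ h2r')),
        abs_of_nonneg (by positivity)]
      calc 2 * r * θ (2 * r) ≤ 2 * (r * 1 * θ r) := by nlinarith
        _ ≤ 2 * (r * |Real.log r| * θ r) := by gcongr
  have hBO : (fun r => r * B r) =O[𝓝[>] 0] fun r => r * |Real.log r| * θ r := by
    have hB' := isBigO_of_div_tendsto_nhds (g := fun r => |Real.log r| * θ r) ?_ 1 hB
    · simpa only [mul_assoc] using (isBigO_refl (fun r : ℝ => r) _).mul hB'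
    · filter_upwards [hsmall] with r ⟨hr, h2r, hlog⟩ h0
      exact absurd h0 (mul_pos (by linarith) (hpos r ⟨hr, by linarith⟩)).ne'
  obtain ⟨C, hC⟩ := (hAO.add hBO).bound
  refine ⟨C, ?_⟩
  filter_upwards [hC, hsmall] with r hCr ⟨hr, h2r, _⟩
  have := hpos r ⟨hr, by linarith⟩
  rwa [Real.norm_eq_abs, Real.norm_of_nonneg (by positivity)] at hCr

theorem integral_zero_sq_mul_div_sq (θ : ℝ → ℝ) {b : ℝ} (hb : 0 ≤ b) :
    ∫ s in 0..b, s ^ 2 * θ s / s ^ 2 = ∫ s in 0..b, θ s := by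
  refine intervalIntegral.integral_congr_ae (.of_forall fun s hs => ?_)
  rw [uIoc_of_le hb] at hs
  field_simp [hs.1.ne']

theorem integral_sq_mul_div_cube (θ : ℝ → ℝ) {a b : ℝ} (ha : 0 < a) (hb : 0 < b) :
    ∫ s in a..b, s ^ 2 * θ s / s ^ 3 = ∫ s in a..b, θ s / s := by
  refine intervalIntegral.integral_congr fun s hs => ?_
  have hs0 : 0 < s := (lt_min ha hb).trans_le hs.1
  field_simp

/-- Calculus lemma: for a decreasing `C¹` gauge `θ` blowing up at `0` with
`θ'/θ = o(1/(r log r))`, setting `h(r) = r²θ(r)` one has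
`∫₀^{2r} h/s² ∼ 2rθ(2r)`, `∫_r^{r₀} h/s³ ∼ |log r| θ(r)`, and consequently
`ψ(r) = ∫₀^{2r} h/s² + r ∫_r^{r₀} h/s³ = O(r |log r| θ(r))`. -/
theorem gauge_integral_asymptotics
    (r₀ : ℝ) (hr₀ : 0 < r₀)
    (θ : ℝ → ℝ)
    (hθC1 : ContDiffOn ℝ 1 θ (Set.Ioo 0 r₀))
    (hθpos : ∀ r ∈ Set.Ioo (0:ℝ) r₀, 0 < θ r)
    (hθdec : StrictAntiOn θ (Set.Ioo 0 r₀))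
    (hθtop : Tendsto θ (nhdsWithin 0 (Set.Ioi 0)) atTop)
    (hlittleo : Tendsto (fun r => deriv θ r / θ r * (r * Real.log r))
      (nhdsWithin 0 (Set.Ioi 0)) (nhds 0))
    (h : ℝ → ℝ) (hh : ∀ r, h r = r ^ 2 * θ r)
    (ψ : ℝ → ℝ)
    (hψ : ∀ r, ψ r = (∫ s in (0:ℝ)..(2*r), h s / s ^ 2) + r * ∫ s in r..r₀, h s / s ^ 3) :
    Tendsto (fun r => (∫ s in (0:ℝ)..(2*r), h s / s ^ 2) / (2 * r * θ (2*r)))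
        (nhdsWithin 0 (Set.Ioi 0)) (nhds 1) ∧
      Tendsto (fun r => (∫ s in r..r₀, h s / s ^ 3) / (|Real.log r| * θ r))
        (nhdsWithin 0 (Set.Ioi 0)) (nhds 1) ∧
      ∃ C : ℝ, ∀ᶠ r in nhdsWithin 0 (Set.Ioi 0), |ψ r| ≤ C * (r * |Real.log r| * θ r) := by
  have hθ' : ∀ x ∈ Ioo 0 r₀, HasDerivAt θ (deriv θ x) x := fun x hx =>
    ((hθC1.differentiableOn one_ne_zero).differentiableAt (isOpen_Ioo.mem_nhds hx)).hasDerivAt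
  have hnear : ∀ᶠ r in 𝓝[>] 0, r ∈ Ioo 0 r₀ := Ioo_mem_nhdsGT hr₀
  have hA : Tendsto (fun r => (∫ s in (0:ℝ)..(2*r), h s / s ^ 2) / (2 * r * θ (2*r)))
      (𝓝[>] 0) (𝓝 1) := by
    have hε := tendsto_zero_of_tendsto_mul_log (u := fun x => deriv θ x / θ x * x)
      (by simpa only [mul_assoc] using hlittleo)
    refine ((tendsto_integral_div_mul_self (hnear.mono hθ') (hnear.mono hθpos) hε).comp
      (tendsto_iff_comap.2 (comap_mulLeft_nhdsGT_zero two_pos).ge)).congr' ?_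
    filter_upwards [self_mem_nhdsWithin] with r (hr : 0 < r)
    simp only [Function.comp_apply, hh, integral_zero_sq_mul_div_sq θ (by positivity : 0 ≤ 2 * r)]
  have hB : Tendsto (fun r => (∫ s in r..r₀, h s / s ^ 3) / (|Real.log r| * θ r))
      (𝓝[>] 0) (𝓝 1) := by
    refine (tendsto_integral_div_self_div_abs_log_mul hr₀ hθ' hθpos hθdec.antitoneOn hθtop
      hlittleo).congr' ?_
    filter_upwards [self_mem_nhdsWithin] with r (hr : 0 < r)
    simp only [hh, integral_sq_mul_div_cube θ hr hr₀]
  refine ⟨hA, hB, ?_⟩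
  simpa only [hψ] using exists_abs_add_mul_le_of_tendsto_div hr₀ hθpos hθdec.antitoneOn hA hB
end

section
/- Let F : [x₀, ∞) → (0, ∞) be a function increasing to +∞. Then there exists a C¹ function G : [x₁, ∞) → (0, ∞) with G ≤ F, G increasing to +∞, and G'(x)/G(x) = o(1/(x·log x)) as x → ∞. -/
open Filter Topology Real

/-!
Take `G = S ∘ log ∘ log` for a `C¹` staircase `S` that climbs one unit on each interval
`[c n, c n + 1]` along `smoothTransition` and is flat in between. The chain rule gives
`G'(x) · x log x / G(x) = S'(log log x) / S(log log x)`, which tends to `0` because the risers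
do not overlap, so `S'` is bounded, while `S → ∞`. Pushing `c n` beyond the point after which
`F ∘ exp ∘ exp ≥ n + 2` makes `S ≤ F ∘ exp ∘ exp` on `[c 0, ∞)`, i.e. `G ≤ F`.
-/

namespace Real.smoothTransition

theorem deriv_eq_zero_of_nonpos {x : ℝ} (hx : x ≤ 0) : deriv smoothTransition x = 0 :=
  IsLocalMin.deriv_eq_zero <| .of_forall fun y => by
    rw [zero_of_nonpos hx]
    exact nonneg y

theorem deriv_eq_zero_of_one_le {x : ℝ} (hx : 1 ≤ x) : deriv smoothTransition x = 0 :=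
  IsLocalMax.deriv_eq_zero <| .of_forall fun y => by
    rw [one_of_one_le hx]
    exact le_one y

theorem mem_Ioo_of_deriv_ne_zero {x : ℝ} (hx : deriv smoothTransition x ≠ 0) :
    x ∈ Set.Ioo 0 1 :=
  ⟨not_le.1 fun h => hx (deriv_eq_zero_of_nonpos h),
    not_le.1 fun h => hx (deriv_eq_zero_of_one_le h)⟩

theorem exists_abs_deriv_le : ∃ C, ∀ x, |deriv smoothTransition x| ≤ C := by
  obtain ⟨C, hC⟩ := (isCompact_Icc (a := (0 : ℝ)) (b := 1)).exists_bound_of_continuousOn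
    (smoothTransition.contDiff (n := 1)).continuous_deriv_one.continuousOn
  refine ⟨C, fun x => ?_⟩
  by_cases hx : deriv smoothTransition x = 0
  · rw [hx, abs_zero]
    exact (norm_nonneg _).trans (hC 0 ⟨le_rfl, zero_le_one⟩)
  · exact hC x (Set.Ioo_subset_Icc_self (mem_Ioo_of_deriv_ne_zero hx))

end Real.smoothTransition

/-- When `c → ∞` only finitely many terms are nonzero at each `t`, so the `tsum` is a genuine
finite sum (`staircase_eqOn_Iio`), not the junk value of a non-summable series. -/
noncomputable def staircase (c : ℕ → ℝ) (t : ℝ) : ℝ :=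
  1 + ∑' n, smoothTransition (t - c n)

section Staircase

variable {c : ℕ → ℝ}

theorem one_le_staircase (t : ℝ) : 1 ≤ staircase c t :=
  le_add_of_nonneg_right (tsum_nonneg fun _ => smoothTransition.nonneg _)

variable (hc : ∀ n, c n + 1 ≤ c (n + 1))
include hc

theorem monotone_of_add_one_le : Monotone c :=
  monotone_nat_of_le_succ fun n => by linarith [hc n]

theorem add_one_le_of_lt {m n : ℕ} (h : m < n) : c m + 1 ≤ c n :=
  (hc m).trans (monotone_of_add_one_le hc h)

theorem tendsto_atTop_of_add_one_le : Tendsto c atTop atTop := by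
  have hlin : ∀ n : ℕ, c 0 + n ≤ c n := by
    intro n
    induction n with
    | zero => simp
    | succ k ih => push_cast; linarith [hc k]
  exact tendsto_atTop_mono hlin (tendsto_atTop_add_const_left _ _ tendsto_natCast_atTop_atTop)

theorem staircase_eqOn_Iio (N : ℕ) :
    Set.EqOn (staircase c) (fun t => 1 + ∑ n ∈ Finset.range N, smoothTransition (t - c n))
      (Set.Iio (c N)) := by
  intro t (ht : t < c N)
  refine congrArg (1 + ·) (tsum_eq_sum fun n hn => smoothTransition.zero_of_nonpos ?_)
  have hNn : N ≤ n := not_lt.1 (Finset.mem_range.not.1 hn)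
  linarith [monotone_of_add_one_le hc hNn]

theorem exists_staircase_eventuallyEq (t : ℝ) : ∃ N : ℕ,
    staircase c =ᶠ[𝓝 t] fun s => 1 + ∑ n ∈ Finset.range N, smoothTransition (s - c n) := by
  obtain ⟨N, hN⟩ := ((tendsto_atTop_of_add_one_le hc).eventually_gt_atTop t).exists
  exact ⟨N, (staircase_eqOn_Iio hc N).eventuallyEq_of_mem (Iio_mem_nhds hN)⟩

theorem contDiff_staircase : ContDiff ℝ 1 (staircase c) :=
  contDiff_iff_contDiffAt.2 fun t => by
    obtain ⟨N, hN⟩ := exists_staircase_eventuallyEq hc t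
    exact ContDiffAt.congr_of_eventuallyEq (by fun_prop) hN

theorem exists_hasDerivAt_staircase (t : ℝ) : ∃ N : ℕ,
    HasDerivAt (staircase c) (∑ n ∈ Finset.range N, deriv smoothTransition (t - c n)) t := by
  obtain ⟨N, hN⟩ := exists_staircase_eventuallyEq hc t
  have hterm (n : ℕ) : HasDerivAt (fun s => smoothTransition (s - c n))
      (deriv smoothTransition (t - c n)) t :=
    .comp_sub_const t (c n)
      ((smoothTransition.contDiff (n := 1)).differentiable one_ne_zero _).hasDerivAt
  exact ⟨N, ((HasDerivAt.fun_sum fun n _ => hterm n).const_add 1).congr_of_eventuallyEq hN⟩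

theorem deriv_smoothTransition_sub_eq_zero {t : ℝ} {m n : ℕ} (hmn : n ≠ m)
    (hm : deriv smoothTransition (t - c m) ≠ 0) : deriv smoothTransition (t - c n) = 0 := by
  obtain ⟨hm₀, hm₁⟩ := smoothTransition.mem_Ioo_of_deriv_ne_zero hm
  rcases hmn.lt_or_gt with h | h
  · exact smoothTransition.deriv_eq_zero_of_one_le (by linarith [add_one_le_of_lt hc h])
  · exact smoothTransition.deriv_eq_zero_of_nonpos (by linarith [add_one_le_of_lt hc h])

theorem exists_abs_deriv_staircase_le : ∃ C, ∀ t, |deriv (staircase c) t| ≤ C := by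
  obtain ⟨C, hC⟩ := smoothTransition.exists_abs_deriv_le
  refine ⟨C, fun t => ?_⟩
  obtain ⟨N, hN⟩ := exists_hasDerivAt_staircase hc t
  rw [hN.deriv]
  by_cases h : ∃ m ∈ Finset.range N, deriv smoothTransition (t - c m) ≠ 0
  · obtain ⟨m, hmN, hm⟩ := h
    rw [Finset.sum_eq_single_of_mem m hmN fun n _ hnm =>
      deriv_smoothTransition_sub_eq_zero hc hnm hm]
    exact hC _
  · push Not at h
    rw [Finset.sum_eq_zero h, abs_zero]
    exact (abs_nonneg _).trans (hC 0)

theorem monotone_staircase : Monotone (staircase c) := by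
  intro a b hab
  obtain ⟨N, hN⟩ := ((tendsto_atTop_of_add_one_le hc).eventually_gt_atTop b).exists
  rw [staircase_eqOn_Iio hc N (hab.trans_lt hN), staircase_eqOn_Iio hc N hN]
  dsimp only
  gcongr with n
  exact smoothTransition.monotone (by linarith)

theorem staircase_le_of_lt {N : ℕ} {t : ℝ} (ht : t < c (N + 1)) : staircase c t ≤ N + 2 := by
  rw [staircase_eqOn_Iio hc (N + 1) ht]
  calc 1 + ∑ n ∈ Finset.range (N + 1), smoothTransition (t - c n)
      ≤ 1 + ∑ _n ∈ Finset.range (N + 1), (1 : ℝ) := by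
        gcongr
        exact smoothTransition.le_one _
    _ = N + 2 := by
        rw [Finset.sum_const, Finset.card_range, nsmul_one]
        push_cast
        ring

theorem le_staircase {N : ℕ} {t : ℝ} (ht : c N ≤ t) : N + 1 ≤ staircase c t := by
  obtain ⟨M, hM⟩ := ((tendsto_atTop_of_add_one_le hc).eventually_gt_atTop t).exists
  have hNM : N ≤ M := by
    by_contra! h
    linarith [add_one_le_of_lt hc h]
  rw [staircase_eqOn_Iio hc M hM]
  calc (N : ℝ) + 1 = 1 + ∑ n ∈ Finset.range N, smoothTransition (t - c n) := by
        rw [Finset.sum_congr rfl fun n hn => smoothTransition.one_of_one_le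
          (by linarith [add_one_le_of_lt hc (Finset.mem_range.1 hn)])]
        simp [add_comm]
    _ ≤ 1 + ∑ n ∈ Finset.range M, smoothTransition (t - c n) := by
        gcongr
        · exact fun _ _ _ => smoothTransition.nonneg _

theorem tendsto_staircase_atTop : Tendsto (staircase c) atTop atTop := by
  refine tendsto_atTop.2 fun b => ?_
  filter_upwards [eventually_ge_atTop (c ⌈b⌉₊)] with t ht
  linarith [Nat.le_ceil b, le_staircase hc ht]

end Staircase

theorem exists_staircase_le {H : ℝ → ℝ} (hH : Tendsto H atTop atTop) :
    ∃ c : ℕ → ℝ, (∀ n, c n + 1 ≤ c (n + 1)) ∧ ∀ t, c 0 ≤ t → staircase c t ≤ H t := by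
  choose T hT using fun n : ℕ =>
    eventually_atTop.1 (hH.eventually_ge_atTop ((n : ℝ) + 2))
  let c : ℕ → ℝ := fun n => Nat.rec (T 0) (fun k ck => max (T (k + 1)) (ck + 1)) n
  have hTc : ∀ n, T n ≤ c n
    | 0 => le_rfl
    | _ + 1 => le_max_left _ _
  have hc : ∀ n, c n + 1 ≤ c (n + 1) := fun n => le_max_right _ _
  refine ⟨c, hc, fun t ht => ?_⟩
  obtain ⟨N, hN⟩ := ((tendsto_atTop_of_add_one_le hc).eventually_gt_atTop t).exists
  induction N with
  | zero => exact absurd ht (not_le.2 hN)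
  | succ N ih =>
    rcases lt_or_ge t (c N) with htN | htN
    · exact ih htN
    · exact (staircase_le_of_lt hc hN).trans (hT N t ((hTc N).trans htN))

theorem tendsto_deriv_div_self_atTop {S : ℝ → ℝ} (hS' : ∃ C, ∀ t, |deriv S t| ≤ C)
    (hS : Tendsto S atTop atTop) : Tendsto (fun t => deriv S t / S t) atTop (𝓝 0) := by
  obtain ⟨C, hC⟩ := hS'
  simpa only [div_eq_mul_inv, Pi.inv_apply, mul_comm] using
    hS.inv_tendsto_atTop.zero_mul_isBoundedUnder_le (isBoundedUnder_of ⟨C, fun t => hC t⟩)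

theorem le_log_log_of_exp_exp_le {a x : ℝ} (h : exp (exp a) ≤ x) : a ≤ log (log x) := by
  have hlog : exp a ≤ log x := (le_log_iff_exp_le ((exp_pos _).trans_le h)).2 h
  exact (le_log_iff_exp_le ((exp_pos a).trans_le hlog)).2 hlog

theorem deriv_comp_log_log_mul {S : ℝ → ℝ} {x : ℝ} (hx : 1 < x)
    (hS : DifferentiableAt ℝ S (log (log x))) :
    deriv (fun y => S (log (log y))) x * (x * log x) = deriv S (log (log x)) := by
  have hlog : 0 < log x := log_pos hx
  have hloglog : HasDerivAt (fun y => log (log y)) ((log x)⁻¹ * x⁻¹) x :=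
    (hasDerivAt_log hlog.ne').comp x (hasDerivAt_log (by linarith))
  have hcomp : HasDerivAt (fun y => S (log (log y))) _ x := hS.hasDerivAt.comp x hloglog
  rw [hcomp.deriv]
  field_simp

theorem exists_slow_minorant_general
    (x₀ : ℝ) (F : ℝ → ℝ)
    (hFtop : Tendsto F atTop atTop) :
    ∃ (x₁ : ℝ) (G : ℝ → ℝ), x₀ ≤ x₁ ∧
      ContDiffOn ℝ 1 G (Set.Ici x₁) ∧
      (∀ x ∈ Set.Ici x₁, 0 < G x) ∧
      (∀ x ∈ Set.Ici x₁, G x ≤ F x) ∧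
      MonotoneOn G (Set.Ici x₁) ∧
      Tendsto G atTop atTop ∧
      Tendsto (fun x => deriv G x / G x * (x * Real.log x)) atTop (nhds 0) := by
  obtain ⟨c, hc, hle⟩ :=
    exists_staircase_le (hFtop.comp (tendsto_exp_atTop.comp tendsto_exp_atTop))
  have hloglog : Tendsto (fun x => log (log x)) atTop atTop :=
    tendsto_log_atTop.comp tendsto_log_atTop
  set x₁ := max x₀ (exp (exp (c 0)))
  have hx₁ : ∀ x ∈ Set.Ici x₁, 1 < x ∧ c 0 ≤ log (log x) := fun x hx =>
    ⟨(one_lt_exp_iff.2 (exp_pos _)).trans_le ((le_max_right _ _).trans hx),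
      le_log_log_of_exp_exp_le ((le_max_right _ _).trans hx)⟩
  refine ⟨x₁, fun x => staircase c (log (log x)), le_max_left _ _, ?_,
    fun x _ => one_pos.trans_le (one_le_staircase _), fun x hx => ?_, ?_,
    (tendsto_staircase_atTop hc).comp hloglog, ?_⟩
  · have hlog : ContDiffOn ℝ 1 (fun x => log (log x)) (Set.Ici x₁) :=
      contDiffOn_log.comp (contDiffOn_log.mono fun x hx => (zero_lt_one.trans (hx₁ x hx).1).ne')
        fun x hx => (log_pos (hx₁ x hx).1).ne'
    exact (contDiff_staircase hc).comp_contDiffOn hlog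
  · simpa only [Function.comp_apply, exp_log (log_pos (hx₁ x hx).1),
      exp_log (zero_lt_one.trans (hx₁ x hx).1)] using hle _ (hx₁ x hx).2
  · refine (monotone_staircase hc).comp_monotoneOn fun a ha b _ hab => ?_
    have ha₁ := (hx₁ a ha).1
    exact log_le_log (log_pos ha₁) (log_le_log (zero_lt_one.trans ha₁) hab)
  · refine ((tendsto_deriv_div_self_atTop (exists_abs_deriv_staircase_le hc)
      (tendsto_staircase_atTop hc)).comp hloglog).congr' ?_
    filter_upwards [eventually_gt_atTop 1] with x hx
    rw [Function.comp_apply, div_mul_eq_mul_div,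
      deriv_comp_log_log_mul hx ((contDiff_staircase hc).differentiable one_ne_zero _)]

/-- Below any function `F` increasing to `+∞` one can find a `C¹` function `G` increasing
to `+∞` with `G'/G = o(1/(x log x))` at infinity. -/
theorem exists_slow_minorant
    (x₀ : ℝ) (F : ℝ → ℝ)
    (hFpos : ∀ x ∈ Set.Ici x₀, 0 < F x)
    (hFmono : MonotoneOn F (Set.Ici x₀))
    (hFtop : Tendsto F atTop atTop) :
    ∃ (x₁ : ℝ) (G : ℝ → ℝ), x₀ ≤ x₁ ∧
      ContDiffOn ℝ 1 G (Set.Ici x₁) ∧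
      (∀ x ∈ Set.Ici x₁, 0 < G x) ∧
      (∀ x ∈ Set.Ici x₁, G x ≤ F x) ∧
      MonotoneOn G (Set.Ici x₁) ∧
      Tendsto G atTop atTop ∧
      Tendsto (fun x => deriv G x / G x * (x * Real.log x)) atTop (nhds 0) :=
  exists_slow_minorant_general x₀ F hFtop
end

section
/- Let ψ : (0, r₀) → (0, ∞) be continuous increasing with ψ(0⁺) = 0 and ψ(r)/(r·|log r|) → ∞ as r → 0⁺. Then there exists a decreasing function θ : (0, r₁) → (0, ∞) with θ(r) → ∞ as r → 0⁺ such that h(r) := r²θ(r) is increasing near 0, satisfies ∫₀ h(s)/s² ds < ∞, and ∫₀^{2r} h(s)/s² ds + r ∫_r^{r₁} h(s)/s³ ds = O(ψ(r)) as r → 0⁺. -/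
open Filter MeasureTheory

/-!
Put `ω(r) = ψ(r) / (r |log r|)`, which tends to `∞`. Its lower envelope `inf_{(0, r]} ω`, capped
by `-log r`, is an antitone `f → ∞` with `f ≤ ω` and `f ≤ -log`. Take for `r² θ(r)` the largest
monotone minorant `inf_{s ∈ [r, r₁]} s² f(s)` of `s² f(s)`: then `θ ≤ f`, and `θ` is still antitone
and still tends to `∞`. Now `∫₀^{2r} θ ≤ ∫₀^{2r} -log s ds = O(r |log r|)`, and, `θ` being
antitone, `r ∫_r^{r₁} θ(s)/s ds ≤ r θ(r) |log r| ≤ r ω(r) |log r| = ψ(r)`; finally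
`r |log r| ≤ ψ(r)` near `0`.
-/

open Set Topology Real

noncomputable def lowerEnvelope (u : ℝ → ℝ) (r : ℝ) : ℝ :=
  sInf (u '' Ioc 0 r)

section LowerEnvelope

variable {u : ℝ → ℝ} {b r c : ℝ}

lemma lowerEnvelope_le (hr : 0 < r) (hu : BddBelow (u '' Ioc 0 r)) : lowerEnvelope u r ≤ u r :=
  csInf_le hu (mem_image_of_mem u ⟨hr, le_rfl⟩)

lemma le_lowerEnvelope (hr : 0 < r) (h : ∀ s ∈ Ioc 0 r, c ≤ u s) : c ≤ lowerEnvelope u r :=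
  le_csInf ((nonempty_Ioc.2 hr).image u) (forall_mem_image.2 h)

lemma antitoneOn_lowerEnvelope (hu : BddBelow (u '' Ioc 0 b)) :
    AntitoneOn (lowerEnvelope u) (Ioc 0 b) := fun _ hx _ hy hxy =>
  csInf_le_csInf (hu.mono (image_mono (Ioc_subset_Ioc_right hy.2))) ((nonempty_Ioc.2 hx.1).image u)
    (image_mono (Ioc_subset_Ioc_right hxy))

lemma tendsto_lowerEnvelope_atTop (hu : Tendsto u (𝓝[>] 0) atTop) :
    Tendsto (lowerEnvelope u) (𝓝[>] 0) atTop := by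
  refine tendsto_atTop.2 fun M => ?_
  obtain ⟨ε, hε, hsub⟩ := mem_nhdsGT_iff_exists_Ioc_subset.1 (hu.eventually_ge_atTop M)
  filter_upwards [Ioo_mem_nhdsGT hε] with r hr
  exact le_lowerEnvelope hr.1 fun s hs => hsub ⟨hs.1, hs.2.trans hr.2.le⟩

end LowerEnvelope

/-- `r ↦ r ^ 2 * sqHull f b r` is the largest monotone minorant of `s ↦ s ^ 2 * f s`
on `(0, b]`. -/
noncomputable def sqHull (f : ℝ → ℝ) (b r : ℝ) : ℝ :=
  sInf ((fun s => s ^ 2 * f s) '' Icc r b) / r ^ 2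

section SqHull

variable {f : ℝ → ℝ} {b r c : ℝ}

lemma sq_mul_sqHull (hr : r ≠ 0) :
    r ^ 2 * sqHull f b r = sInf ((fun s => s ^ 2 * f s) '' Icc r b) := by
  rw [sqHull, mul_div_cancel₀ _ (pow_ne_zero 2 hr)]

lemma bddBelow_sq_mul_image (hf : AntitoneOn f (Ioc 0 b)) (hfb : 0 ≤ f b) (hr : 0 < r) :
    BddBelow ((fun s => s ^ 2 * f s) '' Icc r b) := by
  refine ⟨0, forall_mem_image.2 fun s hs => ?_⟩
  have hs' : s ∈ Ioc 0 b := ⟨hr.trans_le hs.1, hs.2⟩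
  exact mul_nonneg (sq_nonneg s) (hfb.trans (hf hs' ⟨hs'.1.trans_le hs'.2, le_rfl⟩ hs.2))

lemma sqHull_le (hf : AntitoneOn f (Ioc 0 b)) (hfb : 0 ≤ f b) (hr : 0 < r) (hrb : r ≤ b) :
    sqHull f b r ≤ f r := by
  rw [sqHull, div_le_iff₀ (by positivity), mul_comm]
  exact csInf_le (bddBelow_sq_mul_image hf hfb hr) (mem_image_of_mem _ ⟨le_rfl, hrb⟩)

lemma le_sqHull (hr : 0 < r) (hrb : r ≤ b) (h : ∀ s ∈ Icc r b, c * r ^ 2 ≤ s ^ 2 * f s) :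
    c ≤ sqHull f b r := by
  rw [sqHull, le_div_iff₀ (by positivity)]
  exact le_csInf ((nonempty_Icc.2 hrb).image _) (forall_mem_image.2 h)

lemma apply_le_sqHull (hf : AntitoneOn f (Ioc 0 b)) (hfb : 0 ≤ f b) (hr : 0 < r) (hrb : r ≤ b) :
    f b ≤ sqHull f b r := by
  refine le_sqHull hr hrb fun s hs => ?_
  rw [mul_comm]
  exact mul_le_mul (pow_le_pow_left₀ hr.le hs.1 2)
    (hf ⟨hr.trans_le hs.1, hs.2⟩ ⟨hr.trans_le hrb, le_rfl⟩ hs.2) hfb (sq_nonneg s)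

lemma monotoneOn_sq_mul_sqHull (hf : AntitoneOn f (Ioc 0 b)) (hfb : 0 ≤ f b) :
    MonotoneOn (fun r => r ^ 2 * sqHull f b r) (Ioc 0 b) := by
  intro x hx y hy hxy
  simp only [sq_mul_sqHull hx.1.ne', sq_mul_sqHull hy.1.ne']
  exact csInf_le_csInf (bddBelow_sq_mul_image hf hfb hx.1) ((nonempty_Icc.2 hy.2).image _)
    (image_mono (Icc_subset_Icc_left hxy))

lemma antitoneOn_sqHull (hf : AntitoneOn f (Ioc 0 b)) (hfb : 0 ≤ f b) :
    AntitoneOn (sqHull f b) (Ioc 0 b) := by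
  intro x hx y hy hxy
  have hy0 : 0 ≤ sqHull f b y := hfb.trans (apply_le_sqHull hf hfb hy.1 hy.2)
  refine le_sqHull hx.1 hx.2 fun s hs => ?_
  rcases le_or_gt y s with hys | hsy
  · calc sqHull f b y * x ^ 2 ≤ y ^ 2 * sqHull f b y := by
          rw [mul_comm]; exact mul_le_mul_of_nonneg_right (pow_le_pow_left₀ hx.1.le hxy 2) hy0
      _ ≤ s ^ 2 * f s := by
          rw [sq_mul_sqHull hy.1.ne']
          exact csInf_le (bddBelow_sq_mul_image hf hfb hy.1) (mem_image_of_mem _ ⟨hys, hs.2⟩)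
  · rw [mul_comm]
    exact mul_le_mul (pow_le_pow_left₀ hx.1.le hs.1 2)
      ((sqHull_le hf hfb hy.1 hy.2).trans (hf ⟨hx.1.trans_le hs.1, hs.2⟩ hy hsy.le))
      hy0 (sq_nonneg s)

lemma tendsto_sqHull_atTop (hf : AntitoneOn f (Ioc 0 b)) (hfb : 0 < f b) (hb : 0 < b)
    (hlim : Tendsto f (𝓝[>] 0) atTop) : Tendsto (sqHull f b) (𝓝[>] 0) atTop := by
  refine tendsto_atTop.2 fun M => ?_
  set M' := max M 1
  have hM' : 0 < M' := zero_lt_one.trans_le (le_max_right _ _)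
  obtain ⟨δ, hδ, hfδ⟩ := mem_nhdsGT_iff_exists_Ioc_subset.1 (hlim.eventually_ge_atTop M')
  -- Below `δ` the bound comes from `f ≥ M'`, above `δ` from `f ≥ f b` once `r` is small.
  have hsmall : ∀ᶠ r in 𝓝[>] (0 : ℝ), M' * r ^ 2 ≤ δ ^ 2 * f b := by
    have h : Tendsto (fun r : ℝ => M' * r ^ 2) (𝓝 0) (𝓝 (M' * 0 ^ 2)) :=
      ((continuous_pow 2).tendsto 0).const_mul M'
    refine (h.mono_left nhdsWithin_le_nhds).eventually (ge_mem_nhds ?_)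
    simpa using mul_pos (pow_pos hδ 2) hfb
  filter_upwards [Ioc_mem_nhdsGT hb, hsmall] with r hr hMr
  refine (le_max_left M 1).trans (le_sqHull hr.1 hr.2 fun s hs => ?_)
  have hs0 : 0 < s := hr.1.trans_le hs.1
  rcases le_or_gt s δ with hsδ | hδs
  · rw [mul_comm (s ^ 2)]
    exact mul_le_mul (hfδ ⟨hs0, hsδ⟩) (pow_le_pow_left₀ hr.1.le hs.1 2) (sq_nonneg r)
      (hM'.le.trans (hfδ ⟨hs0, hsδ⟩))
  · calc M' * r ^ 2 ≤ δ ^ 2 * f b := hMr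
      _ ≤ s ^ 2 * f s := mul_le_mul (pow_le_pow_left₀ hδ.le hδs.le 2)
          (hf ⟨hs0, hs.2⟩ ⟨hb, le_rfl⟩ hs.2) hfb.le (sq_nonneg s)

end SqHull

section Integrals

variable {θ : ℝ → ℝ} {b r : ℝ}

lemma integrableOn_Ioc_of_le_neg_log (hθ : AntitoneOn θ (Ioc 0 b))
    (hθ0 : ∀ s ∈ Ioc 0 b, 0 ≤ θ s) (hlog : ∀ s ∈ Ioc 0 b, θ s ≤ -log s) :
    IntegrableOn θ (Ioc 0 b) := by
  refine Integrable.mono' intervalIntegral.intervalIntegrable_log'.neg.1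
    (aemeasurable_restrict_of_antitoneOn measurableSet_Ioc hθ).aestronglyMeasurable
    (ae_restrict_of_forall_mem measurableSet_Ioc fun s hs => ?_)
  rw [Real.norm_of_nonneg (hθ0 s hs)]
  exact hlog s hs

lemma integral_zero_two_mul_le (hr : 0 < r) (hre : r ≤ exp (-1))
    (hθ0 : ∀ s ∈ Ioc 0 (2 * r), 0 ≤ θ s) (hlog : ∀ s ∈ Ioc 0 (2 * r), θ s ≤ -log s) :
    ∫ s in (0 : ℝ)..2 * r, s ^ 2 * θ s / s ^ 2 ≤ 4 * (r * |log r|) := by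
  have hlogr : log r ≤ -1 := by simpa using log_le_log hr hre
  rw [intervalIntegral.integral_of_le (by positivity)]
  calc ∫ s in Ioc 0 (2 * r), s ^ 2 * θ s / s ^ 2 ≤ ∫ s in Ioc 0 (2 * r), -log s :=
        setIntegral_mono_of_nonneg
          (fun s hs => div_nonneg (mul_nonneg (sq_nonneg s) (hθ0 s hs)) (sq_nonneg s))
          (fun s hs => by rw [mul_div_cancel_left₀ _ (pow_ne_zero 2 hs.1.ne')]; exact hlog s hs)
          intervalIntegral.intervalIntegrable_log'.neg.1
    _ = 2 * r - 2 * r * log (2 * r) := by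
        rw [← intervalIntegral.integral_of_le (by positivity), intervalIntegral.integral_neg,
          integral_log]
        simp only [zero_mul, sub_zero, add_zero]
        ring
    _ ≤ 4 * (r * |log r|) := by
        rw [log_mul two_ne_zero hr.ne', abs_of_neg (by linarith)]
        nlinarith [log_nonneg one_le_two]

lemma mul_integral_div_cube_le (hθ : AntitoneOn θ (Icc r b)) (hθb : 0 ≤ θ b) (hr : 0 < r)
    (hrb : r ≤ b) (hb : b ≤ 1) :
    r * ∫ s in r..b, s ^ 2 * θ s / s ^ 3 ≤ θ r * (r * |log r|) := by
  have hθ0 : ∀ s ∈ Icc r b, 0 ≤ θ s := fun s hs => hθb.trans (hθ hs ⟨hrb, le_rfl⟩ hs.2)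
  have hzero : (0 : ℝ) ∉ uIcc r b := fun h => (hr.trans_le (uIcc_of_le hrb ▸ h).1).false
  have hint : ∫ s in r..b, s ^ 2 * θ s / s ^ 3 ≤ θ r * log (b / r) := by
    rw [intervalIntegral.integral_of_le hrb]
    calc ∫ s in Ioc r b, s ^ 2 * θ s / s ^ 3 ≤ ∫ s in Ioc r b, θ r * s⁻¹ := by
          refine setIntegral_mono_of_nonneg (fun s hs => ?_) (fun s hs => ?_)
            ((intervalIntegral.intervalIntegrable_inv (fun s hs h => hzero (h ▸ hs))
              continuousOn_id).const_mul (θ r)).1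
          · have := hθ0 s (Ioc_subset_Icc_self hs)
            have := hr.trans hs.1
            positivity
          · have hs0 : s ≠ 0 := (hr.trans hs.1).ne'
            rw [show s ^ 2 * θ s / s ^ 3 = θ s * s⁻¹ by field_simp]
            exact mul_le_mul_of_nonneg_right (hθ ⟨le_rfl, hrb⟩ (Ioc_subset_Icc_self hs) hs.1.le)
              (inv_nonneg.2 (hr.trans hs.1).le)
      _ = θ r * log (b / r) := by
          rw [← intervalIntegral.integral_of_le hrb, intervalIntegral.integral_const_mul,
            integral_inv hzero]
  have hlog : log (b / r) ≤ |log r| := by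
    rw [log_div (hr.trans_le hrb).ne' hr.ne']
    linarith [log_nonpos (hr.trans_le hrb).le hb, neg_le_abs (log r)]
  calc r * ∫ s in r..b, s ^ 2 * θ s / s ^ 3 ≤ r * (θ r * |log r|) := by
        gcongr
        exact hint.trans (mul_le_mul_of_nonneg_left hlog (hθ0 r ⟨le_rfl, hrb⟩))
    _ = θ r * (r * |log r|) := by ring

end Integrals

section SqHullIntegrals

variable {f : ℝ → ℝ} {b r : ℝ}

lemma intervalIntegrable_sqHull (hf : AntitoneOn f (Ioc 0 b)) (hfb : 0 ≤ f b) (hb : 0 ≤ b)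
    (hlog : ∀ s ∈ Ioc 0 b, f s ≤ -log s) :
    IntervalIntegrable (fun s => s ^ 2 * sqHull f b s / s ^ 2) volume 0 b := by
  refine (intervalIntegrable_iff_integrableOn_Ioc_of_le hb).2
    ((integrableOn_Ioc_of_le_neg_log (antitoneOn_sqHull hf hfb)
      (fun s hs => hfb.trans (apply_le_sqHull hf hfb hs.1 hs.2))
      fun s hs => (sqHull_le hf hfb hs.1 hs.2).trans (hlog s hs)).congr_fun
        (fun s hs => ?_) measurableSet_Ioc)
  simp only [mul_div_cancel_left₀ _ (pow_ne_zero 2 hs.1.ne')]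

lemma integral_sqHull_le (hf : AntitoneOn f (Ioc 0 b)) (hfb : 0 ≤ f b)
    (hlog : ∀ s ∈ Ioc 0 b, f s ≤ -log s) (hb : b ≤ exp (-1)) (hr : 0 < r) (h2r : 2 * r ≤ b) :
    (∫ s in (0 : ℝ)..2 * r, s ^ 2 * sqHull f b s / s ^ 2) +
      r * ∫ s in r..b, s ^ 2 * sqHull f b s / s ^ 3 ≤ (4 + f r) * (r * |log r|) := by
  have hrb : r ≤ b := by linarith
  have hsub : Ioc 0 (2 * r) ⊆ Ioc 0 b := Ioc_subset_Ioc_right h2r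
  have hb1 : b ≤ 1 := hb.trans (exp_le_one_iff.2 (by norm_num))
  have hθ := antitoneOn_sqHull hf hfb
  calc _ ≤ 4 * (r * |log r|) + sqHull f b r * (r * |log r|) := add_le_add
        (integral_zero_two_mul_le hr (hrb.trans hb)
          (fun s hs => hfb.trans (apply_le_sqHull hf hfb hs.1 (hsub hs).2))
          fun s hs => (sqHull_le hf hfb hs.1 (hsub hs).2).trans (hlog s (hsub hs)))
        (mul_integral_div_cube_le (hθ.mono fun s hs => ⟨hr.trans_le hs.1, hs.2⟩)
          (hfb.trans (apply_le_sqHull hf hfb (hr.trans_le hrb) le_rfl)) hr hrb hb1)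
    _ ≤ (4 + f r) * (r * |log r|) := by
        rw [add_mul]
        gcongr
        exact sqHull_le hf hfb hr hrb

end SqHullIntegrals

theorem exists_gauge_density_general
    (r₀ : ℝ) (hr₀ : 0 < r₀)
    (ψ : ℝ → ℝ)
    (hψfast : Tendsto (fun r => ψ r / (r * |Real.log r|)) (nhdsWithin 0 (Set.Ioi 0)) atTop) :
    ∃ (r₁ : ℝ) (θ : ℝ → ℝ), 0 < r₁ ∧ r₁ ≤ r₀ ∧
      (∀ r ∈ Set.Ioo (0:ℝ) r₁, 0 < θ r) ∧
      AntitoneOn θ (Set.Ioo 0 r₁) ∧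
      Tendsto θ (nhdsWithin 0 (Set.Ioi 0)) atTop ∧
      MonotoneOn (fun r => r ^ 2 * θ r) (Set.Ioo 0 r₁) ∧
      IntervalIntegrable (fun s => (s ^ 2 * θ s) / s ^ 2) volume 0 r₁ ∧
      ∃ C : ℝ, ∀ᶠ r in nhdsWithin 0 (Set.Ioi 0),
        (∫ s in (0:ℝ)..(2*r), (s ^ 2 * θ s) / s ^ 2) +
          r * ∫ s in r..r₁, (s ^ 2 * θ s) / s ^ 3 ≤ C * ψ r := by
  set ω : ℝ → ℝ := fun r => ψ r / (r * |log r|)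
  obtain ⟨ε, hε, hωε⟩ := mem_nhdsGT_iff_exists_Ioc_subset.1 (hψfast.eventually_ge_atTop 1)
  set r₁ := min (min r₀ ε) (exp (-1))
  have hr₁ : 0 < r₁ := lt_min (lt_min hr₀ hε) (exp_pos _)
  have hr₁1 : r₁ < 1 := (min_le_right _ _).trans_lt (exp_lt_one_iff.2 (by norm_num))
  have hω1 : ∀ s ∈ Ioc 0 r₁, 1 ≤ ω s := fun s hs =>
    hωε ⟨hs.1, hs.2.trans ((min_le_left _ _).trans (min_le_right _ _))⟩
  set f : ℝ → ℝ := fun s => min (lowerEnvelope ω s) (-log s)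
  have hf : AntitoneOn f (Ioc 0 r₁) := fun x hx y hy hxy =>
    min_le_min (antitoneOn_lowerEnvelope ⟨1, forall_mem_image.2 hω1⟩ hx hy hxy)
      (neg_le_neg (log_le_log hx.1 hxy))
  have hfr₁ : 0 < f r₁ := lt_min (one_pos.trans_le (le_lowerEnvelope hr₁ hω1))
    (neg_pos.2 (log_neg hr₁ hr₁1))
  have hflog : ∀ s ∈ Ioc 0 r₁, f s ≤ -log s := fun _ _ => min_le_right _ _
  refine ⟨r₁, sqHull f r₁, hr₁, (min_le_left _ _).trans (min_le_left _ _),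
    fun r hr => hfr₁.trans_le (apply_le_sqHull hf hfr₁.le hr.1 hr.2.le),
    (antitoneOn_sqHull hf hfr₁.le).mono Ioo_subset_Ioc_self,
    tendsto_sqHull_atTop hf hfr₁ hr₁ (tendsto_inf_atTop _ (tendsto_lowerEnvelope_atTop hψfast)
      (tendsto_neg_atBot_atTop.comp tendsto_log_nhdsGT_zero)),
    (monotoneOn_sq_mul_sqHull hf hfr₁.le).mono Ioo_subset_Ioc_self,
    intervalIntegrable_sqHull hf hfr₁.le hr₁.le hflog, 5, ?_⟩
  filter_upwards [Ioo_mem_nhdsGT (half_pos hr₁)] with r hr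
  have hr' : r ∈ Ioc 0 r₁ := ⟨hr.1, by linarith [hr.1, hr.2]⟩
  have hfω : f r ≤ ω r := (min_le_left _ _).trans
    (lowerEnvelope_le hr.1 ⟨1, forall_mem_image.2 fun s hs => hω1 s ⟨hs.1, hs.2.trans hr'.2⟩⟩)
  have hψr : ω r * (r * |log r|) = ψ r := div_mul_cancel₀ _ (mul_ne_zero hr.1.ne'
    (abs_ne_zero.2 (log_neg hr.1 (hr'.2.trans_lt hr₁1)).ne))
  calc _ ≤ (4 + f r) * (r * |log r|) := integral_sqHull_le hf hfr₁.le hflog (min_le_right _ _)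
        hr.1 (by linarith [hr.2])
    _ ≤ 5 * ω r * (r * |log r|) :=
        mul_le_mul_of_nonneg_right (by linarith [hω1 r hr']) (by have := hr.1; positivity)
    _ = 5 * ψ r := by rw [mul_assoc, hψr]

/-- Any gauge `ψ` with `ψ(r)/(r|log r|) → ∞` is achievable: there is a decreasing `θ`
blowing up at `0` such that `h(r) = r²θ(r)` is increasing near `0`, satisfies the Dini
condition `∫₀ h(s)/s² ds < ∞`, and
`∫₀^{2r} h(s)/s² ds + r ∫_r^{r₁} h(s)/s³ ds = O(ψ(r))` as `r → 0⁺`. -/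
theorem exists_gauge_density
    (r₀ : ℝ) (hr₀ : 0 < r₀)
    (ψ : ℝ → ℝ)
    (hψcont : ContinuousOn ψ (Set.Ioo 0 r₀))
    (hψpos : ∀ r ∈ Set.Ioo (0:ℝ) r₀, 0 < ψ r)
    (hψmono : MonotoneOn ψ (Set.Ioo 0 r₀))
    (hψ0 : Tendsto ψ (nhdsWithin 0 (Set.Ioi 0)) (nhds 0))
    (hψfast : Tendsto (fun r => ψ r / (r * |Real.log r|)) (nhdsWithin 0 (Set.Ioi 0)) atTop) :
    ∃ (r₁ : ℝ) (θ : ℝ → ℝ), 0 < r₁ ∧ r₁ ≤ r₀ ∧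
      (∀ r ∈ Set.Ioo (0:ℝ) r₁, 0 < θ r) ∧
      AntitoneOn θ (Set.Ioo 0 r₁) ∧
      Tendsto θ (nhdsWithin 0 (Set.Ioi 0)) atTop ∧
      MonotoneOn (fun r => r ^ 2 * θ r) (Set.Ioo 0 r₁) ∧
      IntervalIntegrable (fun s => (s ^ 2 * θ s) / s ^ 2) volume 0 r₁ ∧
      ∃ C : ℝ, ∀ᶠ r in nhdsWithin 0 (Set.Ioi 0),
        (∫ s in (0:ℝ)..(2*r), (s ^ 2 * θ s) / s ^ 2) +
          r * ∫ s in r..r₁, (s ^ 2 * θ s) / s ^ 3 ≤ C * ψ r :=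
  exists_gauge_density_general r₀ hr₀ ψ hψfast
end

section
/- For k ≥ 2 let Σ^{(k)} = (3/k)ℤ² ∩ closed disk of radius 1 − 1/k centered at 0 (identifying ℝ² with ℂ), and let ν_k be the probability measure ν_k = (1/#Σ^{(k)}) Σ_{σ ∈ Σ^{(k)}} (uniform probability measure on the circle ∂D(σ, 1/k)). Then there exists a universal constant C such that ν_k(D(z,r)) ≤ C·r for every z ∈ ℂ, every r > 0, and every k ≥ 2. -/
open Metric MeasureTheory Real
open scoped Classical ENNReal

/-- The uniform probability measure on the circle of center `c` and radius `R`. -/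
noncomputable def circleUniform (c : ℂ) (R : ℝ) : Measure ℂ :=
  Measure.map (circleMap c R)
    ((ENNReal.ofReal (2 * π))⁻¹ • volume.restrict (Set.Ioc (0:ℝ) (2 * π)))

/-- The lattice point of `(3/k)ℤ²` indexed by `p`. -/
noncomputable def latticePoint (k : ℕ) (p : ℤ × ℤ) : ℂ :=
  ((3 / (k:ℝ) : ℝ) : ℂ) * ((p.1 : ℂ) + (p.2 : ℂ) * Complex.I)

/-- The index set `Σ^{(k)}`: lattice points of `(3/k)ℤ²` in the closed disk of radius `1 - 1/k`. -/
noncomputable def latticeSet (k : ℕ) : Finset (ℤ × ℤ) :=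
  (Finset.Icc (-(k:ℤ), -(k:ℤ)) ((k:ℤ), (k:ℤ))).filter
    (fun p => ‖latticePoint k p‖ ≤ 1 - 1/(k:ℝ))

/-- The probability measure `ν_k` equidistributed on the circles `∂D(σ, 1/k)`, `σ ∈ Σ^{(k)}`. -/
noncomputable def nuMeasure (k : ℕ) : Measure ℂ :=
  (((latticeSet k).card : ℝ≥0∞))⁻¹ •
    ∑ p ∈ latticeSet k, circleUniform (latticePoint k p) (1/(k:ℝ))

/-! A disk `D(z, r)` can only meet the circle `∂D(σ, 1/k)` if `|σ - z| < r + 1/k`, and at most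
`(2k(r + 1/k)/3 + 1)²` points of `(3/k)ℤ²` are that close to `z`. Jordan's inequality
`|e^{iθ} - 1| ≥ 2|θ|/π` for `|θ| ≤ π` shows that the arcs of a circle of radius `R` inside a disk of
radius `r` have total angle at most `2πr/R`, so each such circle gives `D(z, r)` mass at most
`min(rk, 1)`. Since `#Σ^{(k)} ≳ k²`, this is `O(r)` for `r < 1`; for `r ≥ 1` the total mass `1`
suffices. -/

open Finset

open Complex in
theorem mul_abs_le_norm_exp_I_mul_ofReal_sub_one {t : ℝ} (ht : |t| ≤ π) :
    2 / π * |t| ≤ ‖exp (I * t) - 1‖ := by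
  have h := Real.mul_abs_le_abs_sin (x := t / 2) (by rw [abs_div, abs_two]; linarith)
  rw [norm_exp_I_mul_ofReal_sub_one, norm_mul, Real.norm_eq_abs, Real.norm_eq_abs, abs_two]
  rw [abs_div, abs_two] at h
  linarith

theorem mul_abs_le_dist_circleMap (c : ℂ) {R : ℝ} (hR : 0 ≤ R) {x y : ℝ} (h : |x - y| ≤ π) :
    2 / π * R * |x - y| ≤ dist (circleMap c R x) (circleMap c R y) := by
  have hsub : circleMap c R x - circleMap c R y
      = circleMap 0 R y * (Complex.exp (Complex.I * (x - y : ℝ)) - 1) := by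
    rw [circleMap_zero, mul_sub, mul_one, mul_assoc, ← Complex.exp_add]
    simp only [circleMap]
    push_cast
    ring_nf
  rw [mul_comm (2 / π), mul_assoc, dist_eq_norm, hsub, norm_mul, norm_circleMap_zero,
    abs_of_nonneg hR]
  gcongr
  exact mul_abs_le_norm_exp_I_mul_ofReal_sub_one h

theorem volume_preimage_circleMap_ball_inter_Icc_le (c z : ℂ) {R : ℝ} (hR : 0 < R) (r a : ℝ) :
    volume (circleMap c R ⁻¹' ball z r ∩ Set.Icc a (a + π)) ≤ ENNReal.ofReal (π * r / R) := by
  refine (Real.volume_le_diam _).trans (Metric.ediam_le fun x hx y hy => ?_)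
  rw [edist_dist, Real.dist_eq]
  refine ENNReal.ofReal_le_ofReal ((le_div_iff₀ hR).2 ?_)
  have hxy : |x - y| ≤ π :=
    abs_sub_le_iff.2 ⟨by linarith [hx.2.2, hy.2.1], by linarith [hx.2.1, hy.2.2]⟩
  have hchord : dist (circleMap c R x) (circleMap c R y) < 2 * r :=
    calc dist (circleMap c R x) (circleMap c R y)
        ≤ dist (circleMap c R x) z + dist (circleMap c R y) z := dist_triangle_right _ _ _
      _ < 2 * r := by linarith [mem_ball.1 hx.1, mem_ball.1 hy.1]
  have hjordan := (mul_abs_le_dist_circleMap c hR.le hxy).trans hchord.le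
  have hπ := Real.pi_pos
  calc |x - y| * R = π / 2 * (2 / π * R * |x - y|) := by field_simp
    _ ≤ π / 2 * (2 * r) := by gcongr
    _ = π * r := by ring

instance (c : ℂ) (R : ℝ) : IsProbabilityMeasure (circleUniform c R) := by
  refine ⟨?_⟩
  have hπ : 0 < 2 * π := by positivity
  rw [circleUniform, Measure.map_apply (continuous_circleMap c R).measurable MeasurableSet.univ,
    Set.preimage_univ, Measure.smul_apply, Measure.restrict_apply MeasurableSet.univ,
    Set.univ_inter, Real.volume_Ioc, smul_eq_mul, sub_zero,
    ENNReal.inv_mul_cancel (ENNReal.ofReal_pos.2 hπ).ne' ENNReal.ofReal_ne_top]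

theorem circleUniform_ball_le (c z : ℂ) {R : ℝ} (hR : 0 < R) (r : ℝ) :
    circleUniform c R (ball z r) ≤ ENNReal.ofReal (r / R) := by
  rcases le_or_gt r 0 with hr | hr
  · simp [ball_eq_empty.2 hr]
  have hπ := Real.pi_pos
  have hmeas : MeasurableSet (circleMap c R ⁻¹' ball z r) :=
    (continuous_circleMap c R).measurable measurableSet_ball
  rw [circleUniform, Measure.map_apply (continuous_circleMap c R).measurable measurableSet_ball,
    Measure.smul_apply, Measure.restrict_apply hmeas, smul_eq_mul]
  set P := circleMap c R ⁻¹' ball z r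
  have hcover : P ∩ Set.Ioc 0 (2 * π) ⊆ (P ∩ Set.Icc 0 (0 + π)) ∪ (P ∩ Set.Icc π (π + π)) := by
    rintro x ⟨hp, h0, h2π⟩
    rcases le_total x π with h | h
    · exact Or.inl ⟨hp, by constructor <;> linarith⟩
    · exact Or.inr ⟨hp, by constructor <;> linarith⟩
  have hvol : volume (P ∩ Set.Ioc 0 (2 * π)) ≤ ENNReal.ofReal (2 * π) * ENNReal.ofReal (r / R) :=
    calc volume (P ∩ Set.Ioc 0 (2 * π))
        ≤ volume (P ∩ Set.Icc 0 (0 + π)) + volume (P ∩ Set.Icc π (π + π)) :=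
          (measure_mono hcover).trans (measure_union_le _ _)
      _ ≤ ENNReal.ofReal (π * r / R) + ENNReal.ofReal (π * r / R) :=
          add_le_add (volume_preimage_circleMap_ball_inter_Icc_le c z hR r 0)
            (volume_preimage_circleMap_ball_inter_Icc_le c z hR r π)
      _ = ENNReal.ofReal (2 * π) * ENNReal.ofReal (r / R) := by
          rw [← ENNReal.ofReal_add (by positivity) (by positivity),
            ← ENNReal.ofReal_mul (by positivity)]
          ring_nf
  calc (ENNReal.ofReal (2 * π))⁻¹ * volume (P ∩ Set.Ioc 0 (2 * π))
      ≤ (ENNReal.ofReal (2 * π))⁻¹ * (ENNReal.ofReal (2 * π) * ENNReal.ofReal (r / R)) := by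
        gcongr
    _ = ENNReal.ofReal (r / R) := by
        rw [← mul_assoc, ENNReal.inv_mul_cancel (ENNReal.ofReal_pos.2 (by positivity)).ne'
          ENNReal.ofReal_ne_top, one_mul]

theorem circleUniform_ball_eq_zero {c z : ℂ} {R r : ℝ} (hR : 0 ≤ R) (h : r + R ≤ dist c z) :
    circleUniform c R (ball z r) = 0 := by
  have hempty : circleMap c R ⁻¹' ball z r = ∅ := by
    refine Set.eq_empty_of_forall_notMem fun θ hθ => ?_
    have hsphere : dist (circleMap c R θ) c = R := mem_sphere.1 (circleMap_mem_sphere c hR θ)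
    linarith [mem_ball.1 hθ, dist_triangle_left c z (circleMap c R θ)]
  rw [circleUniform, Measure.map_apply (continuous_circleMap c R).measurable measurableSet_ball,
    hempty, measure_empty]

theorem sum_circleUniform_ball_le {ι : Type*} (S : Finset ι) (c : ι → ℂ) (z : ℂ) {R : ℝ}
    (hR : 0 < R) (r : ℝ) :
    ∑ i ∈ S, circleUniform (c i) R (ball z r)
      ≤ #{i ∈ S | dist (c i) z < r + R} * ENNReal.ofReal (min (r / R) 1) := by
  have hfar : ∀ i ∈ S, circleUniform (c i) R (ball z r) ≠ 0 → dist (c i) z < r + R :=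
    fun i _ hne => not_le.1 fun hfar => hne (circleUniform_ball_eq_zero hR.le hfar)
  rw [← sum_filter_of_ne hfar, ← nsmul_eq_mul]
  refine sum_le_card_nsmul _ _ _ fun i _ => ?_
  rw [ENNReal.ofReal_min, ENNReal.ofReal_one]
  exact le_min (circleUniform_ball_le _ z hR r) prob_le_one

theorem latticePoint_re (k : ℕ) (p : ℤ × ℤ) : (latticePoint k p).re = 3 / k * p.1 := by
  simp [latticePoint]

theorem latticePoint_im (k : ℕ) (p : ℤ × ℤ) : (latticePoint k p).im = 3 / k * p.2 := by
  simp [latticePoint]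

theorem norm_latticePoint_le (k : ℕ) (p : ℤ × ℤ) :
    ‖latticePoint k p‖ ≤ 3 / k * (|(p.1 : ℝ)| + |(p.2 : ℝ)|) := by
  refine (Complex.norm_le_abs_re_add_abs_im _).trans (le_of_eq ?_)
  rw [latticePoint_re, latticePoint_im, abs_mul, abs_mul, abs_of_nonneg (by positivity), mul_add]

theorem zero_mem_latticeSet (k : ℕ) : 0 ∈ latticeSet k := by
  simp [latticeSet, latticePoint, Prod.le_def, Nat.cast_inv_le_one]

theorem nuMeasure_apply (k : ℕ) (s : Set ℂ) :
    nuMeasure k s = (#(latticeSet k) : ℝ≥0∞)⁻¹ *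
      ∑ p ∈ latticeSet k, circleUniform (latticePoint k p) (1 / k) s := by
  rw [nuMeasure, Measure.smul_apply, Measure.finsetSum_apply, smul_eq_mul]

instance (k : ℕ) : IsProbabilityMeasure (nuMeasure k) := by
  refine ⟨?_⟩
  have hcard : (#(latticeSet k) : ℝ≥0∞) ≠ 0 :=
    Nat.cast_ne_zero.2 (card_ne_zero_of_mem (zero_mem_latticeSet k))
  simp only [nuMeasure_apply, measure_univ, sum_const, nsmul_one]
  exact ENNReal.inv_mul_cancel hcard (ENNReal.natCast_ne_top _)

theorem card_latticeSet_ge {k : ℕ} (hk : 2 ≤ k) : (k : ℝ) ^ 2 / 144 ≤ #(latticeSet k) := by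
  set m := k / 12
  have hk0 : (0 : ℝ) < k := by positivity
  have hsub : Icc (-(m : ℤ), -(m : ℤ)) (m, m) ⊆ latticeSet k := by
    intro p hp
    simp only [mem_Icc, Prod.le_def] at hp
    obtain ⟨⟨h1, h2⟩, h3, h4⟩ := hp
    have hnorm : ‖latticePoint k p‖ ≤ 3 / k * (m + m) := by
      refine (norm_latticePoint_le k p).trans ?_
      gcongr
      · exact abs_le.2 ⟨by exact_mod_cast h1, by exact_mod_cast h3⟩
      · exact abs_le.2 ⟨by exact_mod_cast h2, by exact_mod_cast h4⟩
    have hm : (m : ℝ) * 12 ≤ k := by exact_mod_cast Nat.div_mul_le_self k 12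
    have hk2 : (2 : ℝ) ≤ k := by exact_mod_cast hk
    simp only [latticeSet, mem_filter, mem_Icc, Prod.le_def]
    refine ⟨⟨⟨by omega, by omega⟩, by omega, by omega⟩, hnorm.trans ?_⟩
    rw [div_mul_eq_mul_div, div_le_iff₀ hk0, sub_mul, one_div_mul_cancel hk0.ne']
    linarith
  have hcard : (#(Icc (-(m : ℤ), -(m : ℤ)) (m, m)) : ℝ) = (2 * m + 1) ^ 2 := by
    rw [card_Icc_prod, Int.card_Icc,
      show (m : ℤ) + 1 - -m = ((2 * m + 1 : ℕ) : ℤ) by push_cast; ring, Int.toNat_natCast]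
    push_cast
    ring
  have hkm : (k : ℝ) < 12 * (m + 1) := by exact_mod_cast (by omega : k < 12 * (m + 1))
  have hle := hcard ▸ (Nat.cast_le (α := ℝ)).2 (card_le_card hsub)
  nlinarith [(m.cast_nonneg : (0 : ℝ) ≤ m)]

theorem card_Icc_ceil_floor_le {a b : ℝ} (hab : a ≤ b) : (#(Icc ⌈a⌉ ⌊b⌋) : ℝ) ≤ b - a + 1 := by
  rw [Int.card_Icc, ← Int.cast_natCast, Int.toNat_eq_max]
  push_cast
  exact max_le (by linarith [Int.floor_le b, Int.le_ceil a]) (by linarith)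

theorem mem_Icc_ceil_floor_of_abs_sub_le {n : ℤ} {x L : ℝ} (h : |n - x| ≤ L) :
    n ∈ Icc ⌈x - L⌉ ⌊x + L⌋ := by
  rw [abs_le] at h
  exact mem_Icc.2 ⟨Int.ceil_le.2 (by linarith), Int.le_floor.2 (by linarith)⟩

theorem card_filter_dist_latticePoint_lt_le (S : Finset (ℤ × ℤ)) {k : ℕ} (hk : 0 < k) (z : ℂ)
    {ρ : ℝ} (hρ : 0 ≤ ρ) :
    (#{p ∈ S | dist (latticePoint k p) z < ρ} : ℝ) ≤ (2 * (k * ρ / 3) + 1) ^ 2 := by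
  have hk0 : (0 : ℝ) < k := by exact_mod_cast hk
  set L := k * ρ / 3
  have hscale : ∀ (n : ℤ) (w : ℝ), |3 / k * n - w| < ρ → |n - k / 3 * w| ≤ L := by
    intro n w h
    rw [show (n : ℝ) - k / 3 * w = k / 3 * (3 / k * n - w) by field_simp, abs_mul,
      abs_of_pos (by positivity)]
    calc k / 3 * |3 / k * n - w| ≤ k / 3 * ρ := by gcongr
      _ = L := by ring
  set x := k / 3 * z.re
  set y := k / 3 * z.im
  have hsub : {p ∈ S | dist (latticePoint k p) z < ρ}
      ⊆ Icc ⌈x - L⌉ ⌊x + L⌋ ×ˢ Icc ⌈y - L⌉ ⌊y + L⌋ := by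
    intro p hp
    have hd := (mem_filter.1 hp).2
    rw [Complex.dist_eq] at hd
    have hre := (Complex.abs_re_le_norm (latticePoint k p - z)).trans_lt hd
    have him := (Complex.abs_im_le_norm (latticePoint k p - z)).trans_lt hd
    rw [Complex.sub_re, latticePoint_re] at hre
    rw [Complex.sub_im, latticePoint_im] at him
    exact mem_product.2 ⟨mem_Icc_ceil_floor_of_abs_sub_le (hscale _ _ hre),
      mem_Icc_ceil_floor_of_abs_sub_le (hscale _ _ him)⟩
  have hL : 0 ≤ L := by positivity
  calc (#{p ∈ S | dist (latticePoint k p) z < ρ} : ℝ)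
      ≤ #(Icc ⌈x - L⌉ ⌊x + L⌋) * #(Icc ⌈y - L⌉ ⌊y + L⌋) := by
        exact_mod_cast (card_le_card hsub).trans_eq (card_product _ _)
    _ ≤ (2 * L + 1) * (2 * L + 1) := by
        gcongr <;> refine (card_Icc_ceil_floor_le (by linarith)).trans_eq (by ring)
    _ = (2 * L + 1) ^ 2 := by ring

theorem nuMeasure_bound_arith {k r : ℝ} (hk : 2 ≤ k) (hr : 0 < r) (hr1 : r < 1) :
    144 / k ^ 2 * ((2 * (k * (r + 1 / k) / 3) + 1) ^ 2 * min (r / (1 / k)) 1) ≤ 1000 * r := by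
  have hk0 : 0 < k := by linarith
  have hs : 0 < r * k := by positivity
  rw [show k * (r + 1 / k) = r * k + 1 by field_simp, one_div, div_inv_eq_mul, div_mul_eq_mul_div,
    div_le_iff₀ (by positivity)]
  rcases le_total (r * k) 1 with hsmall | hlarge
  · rw [min_eq_left hsmall]
    have hB : (2 * ((r * k + 1) / 3) + 1) ^ 2 ≤ (7 / 3) ^ 2 := by gcongr; linarith
    nlinarith [mul_le_mul_of_nonneg_right hB hs.le, mul_le_mul_of_nonneg_left hk hs.le]
  · rw [min_eq_right hlarge]
    have hB : (2 * ((r * k + 1) / 3) + 1) ^ 2 ≤ (7 / 3 * (r * k)) ^ 2 := by gcongr; linarith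
    nlinarith [mul_le_mul_of_nonneg_right (by nlinarith : 784 * r ^ 2 ≤ 1000 * r)
      (by positivity : 0 ≤ k ^ 2)]

/-- Uniform linear bound for the mass of disks under the measures `ν_k`:
there is a universal `C` with `ν_k(D(z,r)) ≤ C·r` for all `k ≥ 2`, `z` and `r > 0`. -/
theorem nuMeasure_ball_le_linear :
    ∃ C > 0, ∀ k : ℕ, 2 ≤ k → ∀ (z : ℂ) (r : ℝ), 0 < r →
      nuMeasure k (ball z r) ≤ ENNReal.ofReal (C * r) := by
  refine ⟨1000, by norm_num, fun k hk z r hr => ?_⟩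
  rcases le_or_gt 1 r with hr1 | hr1
  · exact prob_le_one.trans (ENNReal.one_le_ofReal.2 (by linarith))
  have hR : (0 : ℝ) < 1 / k := by positivity
  have hcount := card_filter_dist_latticePoint_lt_le (latticeSet k) (by omega : 0 < k) z
    (ρ := r + 1 / k) (by positivity)
  calc nuMeasure k (ball z r)
      = (#(latticeSet k) : ℝ≥0∞)⁻¹ *
          ∑ p ∈ latticeSet k, circleUniform (latticePoint k p) (1 / k) (ball z r) :=
        nuMeasure_apply k _
    _ ≤ (ENNReal.ofReal (k ^ 2 / 144))⁻¹ * (ENNReal.ofReal ((2 * (k * (r + 1 / k) / 3) + 1) ^ 2)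
          * ENNReal.ofReal (min (r / (1 / k)) 1)) := by
        gcongr
        · rw [← ENNReal.ofReal_natCast]
          exact ENNReal.ofReal_le_ofReal (card_latticeSet_ge hk)
        · refine (sum_circleUniform_ball_le _ _ z hR r).trans ?_
          gcongr
          rw [← ENNReal.ofReal_natCast]
          exact ENNReal.ofReal_le_ofReal hcount
    _ = ENNReal.ofReal (144 / k ^ 2 *
          ((2 * (k * (r + 1 / k) / 3) + 1) ^ 2 * min (r / (1 / k)) 1)) := by
        rw [← ENNReal.ofReal_inv_of_pos (by positivity), inv_div,
          ← ENNReal.ofReal_mul (by positivity), ← ENNReal.ofReal_mul (by positivity)]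
    _ ≤ ENNReal.ofReal (1000 * r) :=
        ENNReal.ofReal_le_ofReal (nuMeasure_bound_arith (by exact_mod_cast hk) hr hr1)
end
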